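/- arXiv:1402.1061 — 4 statements merged into one kernel-verified Lean document; each statement's English description precedes it below -/
import Mathlib

section
/- Let N ≥ 2, 1 < p ≤ N and q > p − 1 with q ≠ q_c. Let u be a radial solution of (R) on (0,1) with u′(r) ≠ 0 for every r ∈ (0,1), and set w(r) = r^{N−1} |u′(r)|^{p−2} u′(r). Then there exists a constant K ∈ ℝ such that −|w(r)|^{−q/(p−1)} w(r) = b^{−1} r^{(q+1−p)b/(p−1)} + K for all r ∈ (0,1). -/
open Metric Set Filter Topology MeasureTheory

/-- A radial solution of `(R) : (|u'|^{p-2}u')' + ((N-1)/r)|u'|^{p-2}u' - |u'|^q = 0`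
on an interval `I ⊆ (0,∞)`. -/
def IsRadialSolution (N : ℕ) (p q : ℝ) (I : Set ℝ) (u : ℝ → ℝ) : Prop :=
  ContDiffOn ℝ 1 u I ∧
  ∀ r ∈ I, DifferentiableAt ℝ (fun s => |deriv u s| ^ (p - 2) * deriv u s) r ∧
    deriv (fun s => |deriv u s| ^ (p - 2) * deriv u s) r
      + (((N : ℝ) - 1) / r) * (|deriv u r| ^ (p - 2) * deriv u r)
      - |deriv u r| ^ q = 0

lemma hasDerivAt_abs_rpow_mul (α : ℝ) {x : ℝ} (hx : x ≠ 0) :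
    HasDerivAt (fun y : ℝ => |y| ^ α * y) ((α + 1) * |x| ^ α) x := by
  rcases hx.lt_or_gt with h | h
  · have hx' : 0 < -x := by linarith
    have h1 : HasDerivAt (fun y : ℝ => -y) (-1) x := hasDerivAt_neg x
    have h2 : HasDerivAt (fun y : ℝ => (-y) ^ α) (α * (-x) ^ (α - 1) * (-1)) x :=
      (Real.hasDerivAt_rpow_const (p := α) (Or.inl hx'.ne')).comp x h1
    have h3 : HasDerivAt (fun y : ℝ => (-y) ^ α * y)
        ((α * (-x) ^ (α - 1) * (-1)) * x + (-x) ^ α * 1) x := h2.mul (hasDerivAt_id x)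
    have heq : (fun y : ℝ => |y| ^ α * y) =ᶠ[nhds x] (fun y : ℝ => (-y) ^ α * y) := by
      filter_upwards [Iio_mem_nhds h] with y hy
      rw [abs_of_neg hy]
    have h4 := h3.congr_of_eventuallyEq heq
    refine h4.congr_deriv ?_
    have hstep : (-x) ^ (α - 1) * (-x) = (-x) ^ α := by
      rw [← Real.rpow_add_one hx'.ne' (α - 1)]
      congr 1; ring
    have e1 : (α * (-x) ^ (α - 1) * (-1)) * x + (-x) ^ α * 1
        = α * ((-x) ^ (α - 1) * (-x)) + (-x) ^ α := by ring
    rw [e1, hstep, abs_of_neg h]; ring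
  · have h1 : HasDerivAt (fun y : ℝ => y ^ (α + 1)) ((α + 1) * x ^ (α + 1 - 1)) x :=
      Real.hasDerivAt_rpow_const (p := α + 1) (Or.inl h.ne')
    have heq : (fun y : ℝ => |y| ^ α * y) =ᶠ[nhds x] (fun y : ℝ => y ^ (α + 1)) := by
      filter_upwards [Ioi_mem_nhds h] with y hy
      rw [abs_of_pos hy, ← Real.rpow_add_one (ne_of_gt hy)]
    have h2 := h1.congr_of_eventuallyEq heq
    have e : x ^ (α + 1 - 1) = |x| ^ α := by
      rw [abs_of_pos h]; congr 1; ring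
    rw [e] at h2
    exact h2

/-- First integral of the radial equation when `q ≠ q_c`. -/
theorem radial_first_integral (N : ℕ) (hN : 2 ≤ N) (p q : ℝ) (hp1 : 1 < p) (hpN : p ≤ N)
    (hq : p - 1 < q) (hqc : q ≠ (N : ℝ) * (p - 1) / ((N : ℝ) - 1))
    (u : ℝ → ℝ) (hu : IsRadialSolution N p q (Set.Ioo 0 1) u)
    (hu' : ∀ r ∈ Set.Ioo (0 : ℝ) 1, deriv u r ≠ 0)
    (w : ℝ → ℝ) (hw : ∀ r, w r = r ^ ((N : ℝ) - 1) * (|deriv u r| ^ (p - 2) * deriv u r)) :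
    ∃ K : ℝ, ∀ r ∈ Set.Ioo (0 : ℝ) 1,
      -(|w r| ^ (-(q / (p - 1))) * w r) =
        (((N : ℝ) * (p - 1) - ((N : ℝ) - 1) * q) / (q + 1 - p))⁻¹
            * r ^ ((q + 1 - p) * (((N : ℝ) * (p - 1) - ((N : ℝ) - 1) * q) / (q + 1 - p)) / (p - 1))
          + K := by
  obtain ⟨hu1, hu2⟩ := hu
  have h2N : (2:ℝ) ≤ (N:ℝ) := by exact_mod_cast hN
  have hN1 : (0:ℝ) < (N:ℝ) - 1 := by linarith
  have hP : (0:ℝ) < p - 1 := by linarith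
  have hQP : (0:ℝ) < q + 1 - p := by linarith
  have hb : (N:ℝ) * (p-1) - ((N:ℝ)-1) * q ≠ 0 := by
    intro h
    exact hqc (by rw [eq_div_iff hN1.ne']; linarith)
  set b : ℝ := ((N:ℝ) * (p-1) - ((N:ℝ)-1) * q) / (q+1-p) with hbdef
  have hbne : b ≠ 0 := div_ne_zero hb hQP.ne'
  set β : ℝ := (q+1-p) * b / (p-1) with hβdef
  set α : ℝ := -(q / (p-1)) with hαdef
  have hα1 : α + 1 = -((q+1-p)/(p-1)) := by
    rw [hαdef]; field_simp; try ring
  have hcoef : b⁻¹ * β = (q+1-p)/(p-1) := by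
    rw [hβdef]; field_simp; try ring
  have hexp : β - 1 = ((N:ℝ)-1) * (α+1) := by
    rw [hα1, hβdef, hbdef]
    field_simp
    ring
  set F : ℝ → ℝ := fun r => -(|w r| ^ α * w r) - b⁻¹ * r ^ β with hFdef
  have key : ∀ r ∈ Set.Ioo (0:ℝ) 1, HasDerivAt F 0 r := by
    intro r hr
    obtain ⟨hr0, hr1⟩ := hr
    have hd := hu' r ⟨hr0, hr1⟩
    have had : 0 < |deriv u r| := abs_pos.2 hd
    obtain ⟨hφd, hφeq⟩ := hu2 r ⟨hr0, hr1⟩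
    -- derivative of w
    have hrw : HasDerivAt (fun s : ℝ => s ^ ((N:ℝ)-1)) (((N:ℝ)-1) * r ^ ((N:ℝ)-1-1)) r :=
      Real.hasDerivAt_rpow_const (Or.inl hr0.ne')
    have hwd : HasDerivAt w (r ^ ((N:ℝ)-1) * |deriv u r| ^ q) r := by
      have hwfun : w = fun s : ℝ => s ^ ((N:ℝ)-1) * (|deriv u s| ^ (p-2) * deriv u s) :=
        funext hw
      rw [hwfun]
      have h3 := hrw.mul hφd.hasDerivAt
      refine h3.congr_deriv ?_
      have hφ' : deriv (fun s => |deriv u s| ^ (p - 2) * deriv u s) r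
          = |deriv u r| ^ q - (((N:ℝ)-1)/r) * (|deriv u r| ^ (p-2) * deriv u r) := by
        linarith [hφeq]
      rw [hφ']
      have hrr : r ^ ((N:ℝ)-1-1) = r ^ ((N:ℝ)-1) / r := by
        rw [Real.rpow_sub hr0, Real.rpow_one]
      rw [hrr]
      field_simp
      ring
    have hwne : w r ≠ 0 := by
      rw [hw]
      exact mul_ne_zero (Real.rpow_pos_of_pos hr0 _).ne'
        (mul_ne_zero (Real.rpow_pos_of_pos had _).ne' hd)
    have hg : HasDerivAt (fun s => |w s| ^ α * w s)
        ((α + 1) * |w r| ^ α * (r ^ ((N:ℝ)-1) * |deriv u r| ^ q)) r := by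
      have := (hasDerivAt_abs_rpow_mul α hwne).comp r hwd
      exact this.congr_deriv (by ring)
    have hh : HasDerivAt (fun s : ℝ => b⁻¹ * s ^ β) (b⁻¹ * (β * r ^ (β-1))) r :=
      (Real.hasDerivAt_rpow_const (p := β) (Or.inl hr0.ne')).const_mul b⁻¹
    have hFd := (hg.neg).sub hh
    refine hFd.congr_deriv ?_
    -- show 0 = the derivative value
    have habs : |w r| = r ^ ((N:ℝ)-1) * |deriv u r| ^ (p-1) := by
      rw [hw, abs_mul, abs_mul, abs_of_pos (Real.rpow_pos_of_pos hr0 _),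
        abs_of_pos (Real.rpow_pos_of_pos had _)]
      congr 1
      rw [← Real.rpow_add_one had.ne' (p-2)]
      congr 1; ring
    have hkey : |w r| ^ α * (r ^ ((N:ℝ)-1) * |deriv u r| ^ q)
        = r ^ (((N:ℝ)-1) * (α+1)) := by
      rw [habs, Real.mul_rpow (Real.rpow_pos_of_pos hr0 _).le (Real.rpow_pos_of_pos had _).le,
        ← Real.rpow_mul hr0.le, ← Real.rpow_mul had.le]
      have h1 : (p-1) * α = -q := by
        rw [hαdef]; field_simp
      rw [h1]
      have e2 : r ^ (((N:ℝ)-1) * α) * |deriv u r| ^ (-q)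
            * (r ^ ((N:ℝ)-1) * |deriv u r| ^ q)
          = (r ^ (((N:ℝ)-1) * α) * r ^ ((N:ℝ)-1)) * (|deriv u r| ^ (-q) * |deriv u r| ^ q) := by
        ring
      rw [e2, ← Real.rpow_add hr0, ← Real.rpow_add had, neg_add_cancel, Real.rpow_zero, mul_one]
      ring_nf
    rw [← hexp] at hkey
    rw [mul_assoc, hkey]
    have : b⁻¹ * (β * r ^ (β - 1)) = (b⁻¹ * β) * r ^ (β-1) := by ring
    rw [this, hcoef, hα1]
    ring
  -- constancy of F on the interval
  have hconst : ∀ x ∈ Set.Ioo (0:ℝ) 1, ∀ y ∈ Set.Ioo (0:ℝ) 1, F x = F y := by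
    intro x hx y hy
    apply (convex_Ioo (0:ℝ) 1).is_const_of_fderivWithin_eq_zero
      (fun z hz => ((key z hz).differentiableAt).differentiableWithinAt) _ hx hy
    intro z hz
    rw [fderivWithin_of_isOpen isOpen_Ioo hz]
    have : deriv F z = 0 := (key z hz).deriv
    ext
    simp [← toSpanSingleton_deriv, this]
  refine ⟨F (1/2), ?_⟩
  intro r hr
  have h12 : (1/2 : ℝ) ∈ Set.Ioo (0:ℝ) 1 := by norm_num
  have := hconst r hr (1/2) h12
  rw [hFdef] at this
  simp only at this
  linarith [this]
end

section
/- Let N ≥ 2, 1 < p ≤ N and q = q_c = N(p−1)/(N−1). Let u be a radial solution of (R) on (0,1) with u′(r) ≠ 0 for every r ∈ (0,1), and set w(r) = r^{N−1} |u′(r)|^{p−2} u′(r). Then there exists a constant K ∈ ℝ such that −|w(r)|^{−q_c/(p−1)} w(r) = (1/(N−1)) log r + K for all r ∈ (0,1). -/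
open Metric Set Filter Topology MeasureTheory

lemma hasDerivAt_neg_abs_rpow_mul (m : ℝ) {x : ℝ} (hx : x ≠ 0) :
    HasDerivAt (fun y : ℝ => -(|y| ^ (-m) * y)) ((m - 1) * |x| ^ (-m)) x := by
  have key : ∀ a : ℝ, 0 < a → a ^ (-m - 1) * a = a ^ (-m) := by
    intro a ha
    nth_rewrite 2 [← Real.rpow_one a]
    rw [← Real.rpow_add ha]; ring_nf
  rcases hx.lt_or_gt with h | h
  · have hev : (fun y : ℝ => -((-y) ^ (-m) * y)) =ᶠ[𝓝 x] fun y => -(|y| ^ (-m) * y) := by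
      filter_upwards [Iio_mem_nhds h] with y hy
      rw [abs_of_neg hy]
    have h1 : HasDerivAt (fun y : ℝ => (-y) ^ (-m)) ((-m * (-x) ^ (-m - 1)) * (-1)) x :=
      (Real.hasDerivAt_rpow_const (p := -m) (Or.inl (neg_ne_zero.2 hx))).comp x (hasDerivAt_neg x)
    have h2 := (h1.mul (hasDerivAt_id x)).neg
    have := h2.congr_of_eventuallyEq hev.symm
    refine this.congr_deriv ?_
    symm
    rw [abs_of_neg h]
    have hx' : (0:ℝ) < -x := by linarith
    have : (-m * (-x) ^ (-m-1)) * (-1) * x = -m * ((-x) ^ (-m-1) * (-x)) := by ring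
    rw [mul_one, id_eq, this, key _ hx']
    ring
  · have hev : (fun y : ℝ => -(y ^ (-m) * y)) =ᶠ[𝓝 x] fun y => -(|y| ^ (-m) * y) := by
      filter_upwards [Ioi_mem_nhds h] with y hy
      rw [abs_of_pos hy]
    have h1 : HasDerivAt (fun y : ℝ => y ^ (-m)) (-m * x ^ (-m - 1)) x :=
      Real.hasDerivAt_rpow_const (Or.inl hx)
    have h2 := (h1.mul (hasDerivAt_id x)).neg
    have := h2.congr_of_eventuallyEq hev.symm
    refine this.congr_deriv ?_
    symm
    rw [abs_of_pos h, mul_one, id_eq, mul_assoc, key _ h]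
    ring

/-- First integral of the radial equation in the critical case `q = q_c`. -/
theorem radial_first_integral_critical (N : ℕ) (hN : 2 ≤ N) (p q : ℝ) (hp1 : 1 < p)
    (hpN : p ≤ N) (hq : q = (N : ℝ) * (p - 1) / ((N : ℝ) - 1))
    (u : ℝ → ℝ) (hu : IsRadialSolution N p q (Set.Ioo 0 1) u)
    (hu' : ∀ r ∈ Set.Ioo (0 : ℝ) 1, deriv u r ≠ 0)
    (w : ℝ → ℝ) (hw : ∀ r, w r = r ^ ((N : ℝ) - 1) * (|deriv u r| ^ (p - 2) * deriv u r)) :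
    ∃ K : ℝ, ∀ r ∈ Set.Ioo (0 : ℝ) 1,
      -(|w r| ^ (-(q / (p - 1))) * w r) = (1 / ((N : ℝ) - 1)) * Real.log r + K := by
  obtain ⟨hu1, hueq⟩ := hu
  set v : ℝ → ℝ := fun s => |deriv u s| ^ (p - 2) * deriv u s with hv
  have hN1 : (1:ℝ) ≤ (N:ℝ) - 1 := by
    have : (2:ℝ) ≤ (N:ℝ) := by exact_mod_cast hN
    linarith
  have hN1' : (0:ℝ) < (N:ℝ) - 1 := by linarith
  have hp1' : (0:ℝ) < p - 1 := by linarith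
  set m : ℝ := (N:ℝ) / ((N:ℝ) - 1) with hm
  have hqm : q / (p - 1) = m := by
    rw [hq, hm]; field_simp
  have hqpm : q = (p - 1) * m := by
    field_simp at hqm; linarith
  have hm1 : m - 1 = 1 / ((N:ℝ) - 1) := by
    rw [hm]; field_simp; ring
  have hNm : ((N:ℝ) - 1) * m = (N:ℝ) := by
    rw [hm]; field_simp
  have hvpos : ∀ r ∈ Set.Ioo (0:ℝ) 1, v r ≠ 0 ∧ |v r| = |deriv u r| ^ (p - 1) := by
    intro r hr
    have ha : 0 < |deriv u r| := abs_pos.2 (hu' r hr)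
    have hap : 0 < |deriv u r| ^ (p - 2) := Real.rpow_pos_of_pos ha _
    constructor
    · exact mul_ne_zero hap.ne' (hu' r hr)
    · rw [hv]
      simp only [abs_mul, abs_of_pos hap]
      nth_rewrite 2 [← Real.rpow_one (|deriv u r|)]
      rw [← Real.rpow_add ha]; ring_nf
  set F : ℝ → ℝ := fun s => -(|w s| ^ (-m) * w s) - (1 / ((N:ℝ) - 1)) * Real.log s with hFdef
  have hF : ∀ r ∈ Set.Ioo (0:ℝ) 1, HasDerivAt F 0 r := by
    intro r hr
    obtain ⟨hr0, hr1⟩ := hr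
    obtain ⟨hvne, hvabs⟩ := hvpos r ⟨hr0, hr1⟩
    have ha : 0 < |deriv u r| := abs_pos.2 (hu' r ⟨hr0, hr1⟩)
    have haq : 0 < |deriv u r| ^ q := Real.rpow_pos_of_pos ha _
    have hrp : 0 < r ^ ((N:ℝ) - 1) := Real.rpow_pos_of_pos hr0 _
    have hwne : w r ≠ 0 := by rw [hw]; exact mul_ne_zero hrp.ne' hvne
    obtain ⟨hvd, heq⟩ := hueq r ⟨hr0, hr1⟩
    have hvD : HasDerivAt v (deriv v r) r := hvd.hasDerivAt
    have heq' : deriv v r + (((N:ℝ) - 1) / r) * v r - |deriv u r| ^ q = 0 := heq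
    have hDval : deriv v r = |deriv u r| ^ q - (((N:ℝ) - 1) / r) * v r := by linarith
    have hrpow : HasDerivAt (fun s : ℝ => s ^ ((N:ℝ) - 1))
        (((N:ℝ) - 1) * r ^ ((N:ℝ) - 1 - 1)) r :=
      Real.hasDerivAt_rpow_const (Or.inl hr0.ne')
    have hwD : HasDerivAt w
        (((N:ℝ) - 1) * r ^ ((N:ℝ) - 1 - 1) * v r + r ^ ((N:ℝ) - 1) * deriv v r) r := by
      have := hrpow.mul hvD
      exact this.congr_of_eventuallyEq (by filter_upwards with s; rw [hw]; rfl)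
    have hrsub : r ^ ((N:ℝ) - 1 - 1) = r ^ ((N:ℝ) - 1) / r := by
      rw [Real.rpow_sub hr0, Real.rpow_one]
    have hw'val : ((N:ℝ) - 1) * r ^ ((N:ℝ) - 1 - 1) * v r + r ^ ((N:ℝ) - 1) * deriv v r
        = r ^ ((N:ℝ) - 1) * |deriv u r| ^ q := by
      rw [hDval, hrsub]; field_simp; ring
    -- |w r| ^ m
    have hwabs : |w r| = r ^ ((N:ℝ) - 1) * |deriv u r| ^ (p - 1) := by
      rw [hw, abs_mul, abs_of_pos hrp, hvabs]
    have habsq : (|deriv u r| ^ (p - 1)) ^ m = |deriv u r| ^ q := by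
      rw [← Real.rpow_mul (abs_nonneg _), ← hqpm]
    have hwm : |w r| ^ m = r ^ (N:ℝ) * |deriv u r| ^ q := by
      rw [hwabs, Real.mul_rpow hrp.le (Real.rpow_pos_of_pos ha _).le,
        ← Real.rpow_mul hr0.le, hNm, habsq]
    have hwneg : |w r| ^ (-m) = (|w r| ^ m)⁻¹ := by
      rw [Real.rpow_neg (abs_nonneg _)]
    -- chain rule
    have hchain := (hasDerivAt_neg_abs_rpow_mul m hwne).comp r hwD
    have hlog : HasDerivAt (fun s => (1 / ((N:ℝ) - 1)) * Real.log s)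
        ((1 / ((N:ℝ) - 1)) * r⁻¹) r := (Real.hasDerivAt_log hr0.ne').const_mul _
    have hsub := hchain.sub hlog
    have hval : (m - 1) * |w r| ^ (-m) *
        (((N:ℝ) - 1) * r ^ ((N:ℝ) - 1 - 1) * v r + r ^ ((N:ℝ) - 1) * deriv v r)
        - (1 / ((N:ℝ) - 1)) * r⁻¹ = 0 := by
      rw [hw'val, hwneg, hwm, hm1]
      have hrN : r ^ (N:ℝ) = r ^ ((N:ℝ) - 1) * r := by
        have h := Real.rpow_add hr0 ((N:ℝ) - 1) 1
        rw [Real.rpow_one, show ((N:ℝ) - 1) + 1 = (N:ℝ) by ring] at h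
        exact h
      rw [hrN]
      have hcalc : (r ^ ((N:ℝ) - 1) * r * |deriv u r| ^ q)⁻¹ * (r ^ ((N:ℝ) - 1) * |deriv u r| ^ q)
          = r⁻¹ := by
        rw [mul_inv, mul_inv]
        field_simp
      rw [mul_assoc, hcalc]
      ring
    rw [hval] at hsub
    exact hsub
  -- constancy
  have hdiff : DifferentiableOn ℝ F (Set.Ioo 0 1) := fun x hx =>
    ((hF x hx).differentiableAt).differentiableWithinAt
  have hzero : ∀ x ∈ Set.Ioo (0:ℝ) 1, fderivWithin ℝ F (Set.Ioo 0 1) x = 0 := by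
    intro x hx
    rw [fderivWithin_of_isOpen isOpen_Ioo hx, (hF x hx).hasFDerivAt.fderiv]
    ext y
    simp
  have hhalf : (1/2 : ℝ) ∈ Set.Ioo (0:ℝ) 1 := by norm_num
  refine ⟨F (1/2), fun r hr => ?_⟩
  have hconst : F r = F (1/2) :=
    (convex_Ioo (0:ℝ) 1).is_const_of_fderivWithin_eq_zero hdiff hzero hr hhalf
  have : -(|w r| ^ (-m) * w r) - (1 / ((N:ℝ) - 1)) * Real.log r = F (1/2) := hconst
  rw [hqm]
  linarith
end

section
/- Let N ≥ 2, 1 < p ≤ N, p − 1 < q < q_c and k > 0. Define u_k(r) = ∫_r^1 s^{(1−N)/(p−1)} ( b^{−1} s^{(q+1−p)b/(p−1)} + k^{p−1−q} )^{−1/(q+1−p)} ds for r ∈ (0,1]. Then: (a) u_k is a radial solution of (R) on (0,1); (b) u_k > 0 on (0,1) and u_k(1) = 0; (c) lim_{r→0⁺} u_k(r)/μ_p(r) = k; (d) for each fixed r ∈ (0,1) the map k ↦ u_k(r) is strictly increasing and lim_{k→∞} u_k(r) = λ_{N,p,q} (r^{−β_q} − 1). -/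
set_option linter.unusedSectionVars false
set_option linter.unusedVariables false
set_option maxHeartbeats 1000000


open Metric Set Filter Topology MeasureTheory

/-- Radial fundamental-solution profile of the p-Laplacian. -/
noncomputable def muRad (N : ℕ) (p : ℝ) (r : ℝ) : ℝ :=
  if p < N then ((p - 1) / ((N : ℝ) - p)) * r ^ ((p - (N : ℝ)) / (p - 1))
  else -Real.log r

/-- The family of singular radial solutions `u_k`. -/
noncomputable def uFam (N : ℕ) (p q k r : ℝ) : ℝ :=
  ∫ s in r..(1 : ℝ),
    s ^ ((1 - (N : ℝ)) / (p - 1)) *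
      ((((N : ℝ) * (p - 1) - ((N : ℝ) - 1) * q) / (q + 1 - p))⁻¹
          * s ^ ((q + 1 - p) * (((N : ℝ) * (p - 1) - ((N : ℝ) - 1) * q) / (q + 1 - p)) / (p - 1))
        + k ^ (p - 1 - q)) ^ (-(1 / (q + 1 - p)))


noncomputable def bparam (N : ℕ) (p q : ℝ) : ℝ :=
  ((N : ℝ) * (p - 1) - ((N : ℝ) - 1) * q) / (q + 1 - p)

noncomputable def gfun (N : ℕ) (p q k s : ℝ) : ℝ :=
  (bparam N p q)⁻¹ * s ^ ((q + 1 - p) * bparam N p q / (p - 1)) + k ^ (p - 1 - q)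

noncomputable def ffun (N : ℕ) (p q k s : ℝ) : ℝ :=
  s ^ ((1 - (N : ℝ)) / (p - 1)) * gfun N p q k s ^ (-(1 / (q + 1 - p)))

lemma uFam_eq (N : ℕ) (p q k r : ℝ) :
    uFam N p q k r = ∫ s in r..(1:ℝ), ffun N p q k s := rfl

lemma uFam_eq' (N : ℕ) (p q k : ℝ) :
    uFam N p q k = fun r => ∫ s in r..(1:ℝ), ffun N p q k s := rfl

section Basic
variable {N : ℕ} {p q : ℝ} (hN : 2 ≤ N) (hp1 : 1 < p) (hpN : p ≤ N)
  (hq1 : p - 1 < q) (hq2 : q < (N : ℝ) * (p - 1) / ((N : ℝ) - 1))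

include hN hp1 hpN hq1 hq2

lemma NR_pos : (1 : ℝ) < (N : ℝ) := by
  have : (2:ℝ) ≤ (N:ℝ) := by exact_mod_cast hN
  linarith

lemma alpha_pos : 0 < q + 1 - p := by linarith

lemma bparam_pos : 0 < bparam N p q := by
  have hN1 : (1:ℝ) < (N:ℝ) := NR_pos hN hp1 hpN hq1 hq2
  have h2 : q * ((N:ℝ) - 1) < (N:ℝ) * (p-1) := by
    have := (lt_div_iff₀ (by linarith : (0:ℝ) < (N:ℝ)-1)).mp hq2
    linarith
  exact div_pos (by linarith) (by linarith)

lemma qltp : q < p := by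
  have hN1 : (1:ℝ) < (N:ℝ) := NR_pos hN hp1 hpN hq1 hq2
  have h2 : q * ((N:ℝ) - 1) < (N:ℝ) * (p-1) := by
    have := (lt_div_iff₀ (by linarith : (0:ℝ) < (N:ℝ)-1)).mp hq2
    linarith
  nlinarith [hpN, hN1]

lemma gfun_pos {k s : ℝ} (hk : 0 < k) (hs : 0 < s) : 0 < gfun N p q k s :=
  add_pos (mul_pos (inv_pos.2 (bparam_pos hN hp1 hpN hq1 hq2))
    (Real.rpow_pos_of_pos hs _)) (Real.rpow_pos_of_pos hk _)

lemma ffun_pos {k s : ℝ} (hk : 0 < k) (hs : 0 < s) : 0 < ffun N p q k s :=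
  mul_pos (Real.rpow_pos_of_pos hs _)
    (Real.rpow_pos_of_pos (gfun_pos hN hp1 hpN hq1 hq2 hk hs) _)

lemma gfun_contAt {k s : ℝ} (hs : 0 < s) : ContinuousAt (gfun N p q k) s := by
  unfold gfun
  exact ((Real.continuousAt_rpow_const s _ (Or.inl hs.ne')).const_mul _).add continuousAt_const

lemma ffun_contAt {k s : ℝ} (hk : 0 < k) (hs : 0 < s) : ContinuousAt (ffun N p q k) s := by
  unfold ffun
  exact (Real.continuousAt_rpow_const s _ (Or.inl hs.ne')).mul
    ((gfun_contAt hN hp1 hpN hq1 hq2 hs).rpow_const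
      (Or.inl (gfun_pos hN hp1 hpN hq1 hq2 hk hs).ne'))

lemma ffun_contOn {k : ℝ} (hk : 0 < k) : ContinuousOn (ffun N p q k) (Set.Ioi 0) :=
  fun s hs => (ffun_contAt hN hp1 hpN hq1 hq2 hk hs).continuousWithinAt

lemma ffun_intable {k a c : ℝ} (hk : 0 < k) (ha : 0 < a) (hc : 0 < c) :
    IntervalIntegrable (ffun N p q k) volume a c := by
  apply ContinuousOn.intervalIntegrable
  apply (ffun_contOn hN hp1 hpN hq1 hq2 hk).mono
  intro x hx
  exact lt_of_lt_of_le (lt_min ha hc) hx.1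

lemma uFam_hasDeriv {k r : ℝ} (hk : 0 < k) (hr : 0 < r) :
    HasDerivAt (uFam N p q k) (-(ffun N p q k r)) r := by
  rw [uFam_eq']
  exact intervalIntegral.integral_hasDerivAt_left
    (ffun_intable hN hp1 hpN hq1 hq2 hk hr one_pos)
    (ContinuousOn.stronglyMeasurableAtFilter isOpen_Ioi
      (ffun_contOn hN hp1 hpN hq1 hq2 hk) r hr)
    (ffun_contAt hN hp1 hpN hq1 hq2 hk hr)

lemma uFam_deriv {k r : ℝ} (hk : 0 < k) (hr : 0 < r) :
    deriv (uFam N p q k) r = -(ffun N p q k r) :=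
  (uFam_hasDeriv hN hp1 hpN hq1 hq2 hk hr).deriv

end Basic


lemma ratio_tendsto {f g : ℝ → ℝ} {L : ℝ}
    (hf : ∀ s : ℝ, 0 < s → ContinuousAt f s) (hg : ∀ s : ℝ, 0 < s → ContinuousAt g s)
    (hgpos : ∀ s : ℝ, 0 < s → 0 < g s)
    (hG : Tendsto (fun r => ∫ s in r..(1:ℝ), g s) (𝓝[>] (0:ℝ)) atTop)
    (hfg : Tendsto (fun s => f s / g s) (𝓝[>] (0:ℝ)) (𝓝 L)) :
    Tendsto (fun r => (∫ s in r..(1:ℝ), f s) / (∫ s in r..(1:ℝ), g s))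
      (𝓝[>] (0:ℝ)) (𝓝 L) := by
  have hfint : ∀ a c : ℝ, 0 < a → 0 < c → IntervalIntegrable f volume a c := fun a c ha hc =>
    ContinuousOn.intervalIntegrable (fun x hx =>
      (hf x (lt_of_lt_of_le (lt_min ha hc) hx.1)).continuousWithinAt)
  have hgint : ∀ a c : ℝ, 0 < a → 0 < c → IntervalIntegrable g volume a c := fun a c ha hc =>
    ContinuousOn.intervalIntegrable (fun x hx =>
      (hg x (lt_of_lt_of_le (lt_min ha hc) hx.1)).continuousWithinAt)
  have hint : ∀ a c : ℝ, 0 < a → 0 < c →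
      IntervalIntegrable (fun s => f s - L * g s) volume a c := fun a c ha hc =>
    (hfint a c ha hc).sub ((hgint a c ha hc).const_mul L)
  rw [Metric.tendsto_nhds]
  intro ε hε
  have hε3 : 0 < ε / 3 := by linarith
  have hball := hfg (Metric.ball_mem_nhds L hε3)
  obtain ⟨δ, hδpos, hδsub⟩ := mem_nhdsGT_iff_exists_Ioo_subset.mp hball
  set d : ℝ := min δ 1 / 2 with hd
  have hδ0 : 0 < δ := hδpos
  have hd0 : 0 < d := by positivity
  have hd1 : d ≤ 1 := by
    rw [hd]; have := min_le_right δ 1; linarith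
  have hdδ : d < δ := by
    rw [hd]; rcases le_total δ 1 with h | h
    · rw [min_eq_left h]; linarith
    · rw [min_eq_right h]; linarith
  have hpt : ∀ s : ℝ, 0 < s → s ≤ d → |f s - L * g s| ≤ ε / 3 * g s := by
    intro s hs0 hsd
    have hmem : s ∈ Ioo 0 δ := ⟨hs0, lt_of_le_of_lt hsd hdδ⟩
    have hb := hδsub hmem
    rw [mem_preimage, Metric.mem_ball, Real.dist_eq] at hb
    have hgp := hgpos s hs0
    have heq : f s / g s - L = (f s - L * g s) / g s := by
      field_simp
    rw [heq, abs_div, abs_of_pos hgp, div_lt_iff₀ hgp] at hb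
    linarith
  set C : ℝ := |∫ s in d..(1:ℝ), (f s - L * g s)| with hC
  have hC0 : 0 ≤ C := abs_nonneg _
  have hM : ∀ᶠ r in 𝓝[>] (0:ℝ), (3 * (C + 1) / ε) ≤ ∫ s in r..(1:ℝ), g s :=
    hG.eventually (eventually_ge_atTop _)
  have hM1 : ∀ᶠ r in 𝓝[>] (0:ℝ), (1:ℝ) ≤ ∫ s in r..(1:ℝ), g s :=
    hG.eventually (eventually_ge_atTop _)
  filter_upwards [hM, hM1, Ioo_mem_nhdsGT_of_mem (Set.left_mem_Ico.mpr hd0)]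
    with r hMr hM1r hrd
  obtain ⟨hr0, hrd'⟩ := hrd
  have hGpos : (0:ℝ) < ∫ s in r..(1:ℝ), g s := lt_of_lt_of_le one_pos hM1r
  -- split the integral
  have hsplit : (∫ s in r..(1:ℝ), f s) - L * ∫ s in r..(1:ℝ), g s
      = (∫ s in r..d, (f s - L * g s)) + ∫ s in d..(1:ℝ), (f s - L * g s) := by
    rw [intervalIntegral.integral_add_adjacent_intervals (hint r d hr0 hd0)
      (hint d 1 hd0 one_pos),
      intervalIntegral.integral_sub (hfint r 1 hr0 one_pos) ((hgint r 1 hr0 one_pos).const_mul L),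
      intervalIntegral.integral_const_mul]
  have h1 : |∫ s in r..d, (f s - L * g s)| ≤ ε / 3 * ∫ s in r..d, g s := by
    calc |∫ s in r..d, (f s - L * g s)| ≤ ∫ s in r..d, |f s - L * g s| :=
          intervalIntegral.abs_integral_le_integral_abs hrd'.le
      _ ≤ ∫ s in r..d, ε / 3 * g s := by
          apply intervalIntegral.integral_mono_on hrd'.le ((hint r d hr0 hd0).abs)
            ((hgint r d hr0 hd0).const_mul _)
          intro x hx
          exact hpt x (lt_of_lt_of_le hr0 hx.1) hx.2
      _ = ε / 3 * ∫ s in r..d, g s := intervalIntegral.integral_const_mul _ _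
  have h2 : ∫ s in r..d, g s ≤ ∫ s in r..(1:ℝ), g s := by
    have hadj : (∫ s in r..d, g s) + ∫ s in d..(1:ℝ), g s = ∫ s in r..(1:ℝ), g s :=
      intervalIntegral.integral_add_adjacent_intervals (hgint r d hr0 hd0) (hgint d 1 hd0 one_pos)
    have hnn : 0 ≤ ∫ s in d..(1:ℝ), g s :=
      intervalIntegral.integral_nonneg hd1 (fun u hu => (hgpos u (lt_of_lt_of_le hd0 hu.1)).le)
    linarith
  have h3 : 0 ≤ ∫ s in r..d, g s :=
    intervalIntegral.integral_nonneg hrd'.le (fun u hu => (hgpos u (lt_of_lt_of_le hr0 hu.1)).le)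
  have hkey : |(∫ s in r..(1:ℝ), f s) - L * ∫ s in r..(1:ℝ), g s|
      ≤ ε / 3 * (∫ s in r..(1:ℝ), g s) + C := by
    rw [hsplit]
    calc |(∫ s in r..d, (f s - L * g s)) + ∫ s in d..(1:ℝ), (f s - L * g s)|
        ≤ |∫ s in r..d, (f s - L * g s)| + C := by rw [hC]; exact abs_add_le _ _
      _ ≤ ε / 3 * (∫ s in r..(1:ℝ), g s) + C := by
          have := h1.trans (mul_le_mul_of_nonneg_left h2 (le_of_lt hε3))
          linarith
  rw [Real.dist_eq]
  have heq : (∫ s in r..(1:ℝ), f s) / (∫ s in r..(1:ℝ), g s) - L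
      = ((∫ s in r..(1:ℝ), f s) - L * ∫ s in r..(1:ℝ), g s) / ∫ s in r..(1:ℝ), g s := by
    field_simp
  rw [heq, abs_div, abs_of_pos hGpos, div_lt_iff₀ hGpos]
  have hMε : 3 * (C + 1) ≤ (∫ s in r..(1:ℝ), g s) * ε := (div_le_iff₀ hε).mp hMr
  nlinarith [hkey, hC0, hε, hGpos]

noncomputable def Wfun (N : ℕ) (p q k s : ℝ) : ℝ :=
  s ^ (1 - (N : ℝ)) * gfun N p q k s ^ (-(1 / (q + 1 - p)) * (p - 1))

section Main
variable {N : ℕ} {p q : ℝ} (hN : 2 ≤ N) (hp1 : 1 < p) (hpN : p ≤ N)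
  (hq1 : p - 1 < q) (hq2 : q < (N : ℝ) * (p - 1) / ((N : ℝ) - 1))

include hN hp1 hpN hq1 hq2

lemma ffun_pow_eq_W {k s : ℝ} (hk : 0 < k) (hs : 0 < s) :
    ffun N p q k s ^ (p - 1) = Wfun N p q k s := by
  have hg := (gfun_pos hN hp1 hpN hq1 hq2 hk hs).le
  have hp0 : p - 1 ≠ 0 := sub_ne_zero.2 (ne_of_gt hp1)
  unfold ffun Wfun
  rw [Real.mul_rpow (Real.rpow_nonneg hs.le _) (Real.rpow_nonneg hg _),
    ← Real.rpow_mul hs.le, ← Real.rpow_mul hg]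
  congr 1
  field_simp

lemma ffun_pow_q {k s : ℝ} (hk : 0 < k) (hs : 0 < s) :
    ffun N p q k s ^ q
      = s ^ ((1 - (N : ℝ)) / (p - 1) * q) * gfun N p q k s ^ (-(1 / (q + 1 - p)) * q) := by
  have hg := (gfun_pos hN hp1 hpN hq1 hq2 hk hs).le
  unfold ffun
  rw [Real.mul_rpow (Real.rpow_nonneg hs.le _) (Real.rpow_nonneg hg _),
    ← Real.rpow_mul hs.le, ← Real.rpow_mul hg]

lemma gfun_hasDeriv {k s : ℝ} (hs : 0 < s) :
    HasDerivAt (gfun N p q k)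
      ((bparam N p q)⁻¹ * ((q + 1 - p) * bparam N p q / (p - 1)
        * s ^ ((q + 1 - p) * bparam N p q / (p - 1) - 1))) s := by
  unfold gfun
  exact ((Real.hasDerivAt_rpow_const (Or.inl hs.ne')).const_mul _).add_const _

lemma Wfun_hasDeriv {k s : ℝ} (hk : 0 < k) (hs : 0 < s) :
    HasDerivAt (Wfun N p q k)
      ((1 - (N : ℝ)) * s ^ (1 - (N : ℝ) - 1) * gfun N p q k s ^ (-(1 / (q + 1 - p)) * (p - 1))
        + s ^ (1 - (N : ℝ)) * ((-(1 / (q + 1 - p)) * (p - 1))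
            * gfun N p q k s ^ (-(1 / (q + 1 - p)) * (p - 1) - 1)
            * ((bparam N p q)⁻¹ * ((q + 1 - p) * bparam N p q / (p - 1)
              * s ^ ((q + 1 - p) * bparam N p q / (p - 1) - 1))))) s := by
  unfold Wfun
  have h := (Real.hasDerivAt_rpow_const (p := 1 - (N:ℝ)) (Or.inl hs.ne')).mul
    ((gfun_hasDeriv hN hp1 hpN hq1 hq2 hs).rpow_const (p := -(1 / (q + 1 - p)) * (p - 1))
      (Or.inl (gfun_pos hN hp1 hpN hq1 hq2 hk hs).ne'))
  refine h.congr_deriv ?_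
  ring

lemma main_identity {k r : ℝ} (hk : 0 < k) (hr : 0 < r) :
    -((1 - (N : ℝ)) * r ^ (1 - (N : ℝ) - 1) * gfun N p q k r ^ (-(1 / (q + 1 - p)) * (p - 1))
        + r ^ (1 - (N : ℝ)) * ((-(1 / (q + 1 - p)) * (p - 1))
            * gfun N p q k r ^ (-(1 / (q + 1 - p)) * (p - 1) - 1)
            * ((bparam N p q)⁻¹ * ((q + 1 - p) * bparam N p q / (p - 1)
              * r ^ ((q + 1 - p) * bparam N p q / (p - 1) - 1)))))
      + ((N : ℝ) - 1) / r * (-(Wfun N p q k r))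
      - (r ^ ((1 - (N : ℝ)) / (p - 1) * q) * gfun N p q k r ^ (-(1 / (q + 1 - p)) * q)) = 0 := by
  have hb := bparam_pos hN hp1 hpN hq1 hq2
  have hα := alpha_pos hN hp1 hpN hq1 hq2
  have hp0 : p - 1 ≠ 0 := by linarith
  have hα0 : q + 1 - p ≠ 0 := ne_of_gt hα
  have hb0 : bparam N p q ≠ 0 := ne_of_gt hb
  set G := gfun N p q k r with hGdef
  have hG : 0 < G := gfun_pos hN hp1 hpN hq1 hq2 hk hr
  -- first term vs second term of the equation
  have e1 : r ^ (1 - (N : ℝ) - 1) = r ^ (1 - (N : ℝ)) / r := by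
    rw [Real.rpow_sub hr, Real.rpow_one]
  -- coefficient simplification: m2 * b⁻¹ * e = -1
  have e2 : (-(1 / (q + 1 - p)) * (p - 1)) * ((bparam N p q)⁻¹
      * ((q + 1 - p) * bparam N p q / (p - 1))) = -1 := by
    field_simp
  -- exponent identities
  have e3 : r ^ (1 - (N : ℝ)) * r ^ ((q + 1 - p) * bparam N p q / (p - 1) - 1)
      = r ^ ((1 - (N : ℝ)) / (p - 1) * q) := by
    rw [← Real.rpow_add hr]
    congr 1
    unfold bparam
    field_simp
    ring
  have e4 : (-(1 / (q + 1 - p)) * (p - 1) - 1) = -(1 / (q + 1 - p)) * q := by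
    field_simp
    ring
  unfold Wfun
  rw [e1, e4, ← e3, ← hGdef]
  set X := r ^ (1 - (N : ℝ))
  set Y := G ^ (-(1 / (q + 1 - p)) * (p - 1))
  set Z := G ^ (-(1 / (q + 1 - p)) * q)
  linear_combination (-(X * Z * r ^ ((q + 1 - p) * bparam N p q / (p - 1) - 1))) * e2

lemma part_a {k : ℝ} (hk : 0 < k) :
    IsRadialSolution N p q (Set.Ioo 0 1) (uFam N p q k) := by
  constructor
  · -- smoothness
    rw [show (1 : WithTop ℕ∞) = 0 + 1 from (zero_add 1).symm,
      contDiffOn_succ_iff_deriv_of_isOpen isOpen_Ioo]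
    refine ⟨fun r hr => (uFam_hasDeriv hN hp1 hpN hq1 hq2 hk hr.1).differentiableAt.differentiableWithinAt, by simp, ?_⟩
    rw [contDiffOn_zero]
    exact (((ffun_contOn hN hp1 hpN hq1 hq2 hk).mono (fun x hx => hx.1)).neg).congr
      (fun r hr => uFam_deriv hN hp1 hpN hq1 hq2 hk hr.1)
  · intro r hr
    obtain ⟨hr0, hr1⟩ := hr
    have hev : (fun s => |deriv (uFam N p q k) s| ^ (p - 2) * deriv (uFam N p q k) s)
        =ᶠ[𝓝 r] (fun s => -(Wfun N p q k s)) := by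
      filter_upwards [isOpen_Ioo.mem_nhds ⟨hr0, hr1⟩] with s hs
      have hds : deriv (uFam N p q k) s = -(ffun N p q k s) :=
        uFam_deriv hN hp1 hpN hq1 hq2 hk hs.1
      have hfs := ffun_pos hN hp1 hpN hq1 hq2 hk hs.1
      rw [hds, abs_neg, abs_of_pos hfs, mul_neg, ← Real.rpow_add_one hfs.ne',
        show p - 2 + 1 = p - 1 by ring, ffun_pow_eq_W hN hp1 hpN hq1 hq2 hk hs.1]
    have hWd := ((Wfun_hasDeriv hN hp1 hpN hq1 hq2 hk hr0).neg)
    refine ⟨hWd.differentiableAt.congr_of_eventuallyEq hev, ?_⟩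
    have h0 : |deriv (uFam N p q k) r| ^ (p - 2) * deriv (uFam N p q k) r
        = -(Wfun N p q k r) := hev.eq_of_nhds
    have h1 : |deriv (uFam N p q k) r| ^ q
        = r ^ ((1 - (N : ℝ)) / (p - 1) * q)
          * gfun N p q k r ^ (-(1 / (q + 1 - p)) * q) := by
      rw [uFam_deriv hN hp1 hpN hq1 hq2 hk hr0, abs_neg,
        abs_of_pos (ffun_pos hN hp1 hpN hq1 hq2 hk hr0),
        ffun_pow_q hN hp1 hpN hq1 hq2 hk hr0]
    rw [hev.deriv_eq, show (fun s => -Wfun N p q k s) = -Wfun N p q k from rfl, hWd.deriv, h0, h1]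
    exact main_identity hN hp1 hpN hq1 hq2 hk hr0

lemma part_b {k : ℝ} (hk : 0 < k) {r : ℝ} (hr : r ∈ Set.Ioo (0:ℝ) 1) :
    0 < uFam N p q k r := by
  rw [uFam_eq]
  exact intervalIntegral.intervalIntegral_pos_of_pos_on
    (ffun_intable hN hp1 hpN hq1 hq2 hk hr.1 one_pos)
    (fun s hs => ffun_pos hN hp1 hpN hq1 hq2 hk (hr.1.trans hs.1)) hr.2

lemma part_d_mono {r : ℝ} (hr : r ∈ Set.Ioo (0:ℝ) 1) :
    StrictMonoOn (fun k' => uFam N p q k' r) (Set.Ioi 0) := by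
  intro k1 hk1 k2 hk2 hlt
  have hα := alpha_pos hN hp1 hpN hq1 hq2
  simp only [uFam_eq]
  rw [← sub_pos, ← intervalIntegral.integral_sub
    (ffun_intable hN hp1 hpN hq1 hq2 hk2 hr.1 one_pos)
    (ffun_intable hN hp1 hpN hq1 hq2 hk1 hr.1 one_pos)]
  apply intervalIntegral.intervalIntegral_pos_of_pos_on
  · exact (ffun_intable hN hp1 hpN hq1 hq2 hk2 hr.1 one_pos).sub
      (ffun_intable hN hp1 hpN hq1 hq2 hk1 hr.1 one_pos)
  · intro s hs
    have hs0 : 0 < s := hr.1.trans hs.1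
    have hgl : gfun N p q k2 s < gfun N p q k1 s := by
      unfold gfun
      have : k2 ^ (p - 1 - q) < k1 ^ (p - 1 - q) :=
        Real.rpow_lt_rpow_of_neg hk1 hlt (by linarith [qltp hN hp1 hpN hq1 hq2])
      linarith
    have hmneg : -(1 / (q + 1 - p)) < 0 := by
      have : 0 < 1 / (q + 1 - p) := by positivity
      linarith
    have h2 := Real.rpow_lt_rpow_of_neg (gfun_pos hN hp1 hpN hq1 hq2 hk2 hs0) hgl hmneg
    exact sub_pos.2 (mul_lt_mul_of_pos_left h2 (Real.rpow_pos_of_pos hs0 _))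
  · exact hr.2

lemma part_d_lim {r : ℝ} (hr : r ∈ Set.Ioo (0:ℝ) 1) :
    Tendsto (fun k' => uFam N p q k' r) atTop
      (𝓝 (((p - q) / (q + 1 - p))⁻¹ * (bparam N p q) ^ (1 / (q + 1 - p))
          * (r ^ (-((p - q) / (q + 1 - p))) - 1))) := by
  have hb := bparam_pos hN hp1 hpN hq1 hq2
  have hα := alpha_pos hN hp1 hpN hq1 hq2
  have hqp := qltp hN hp1 hpN hq1 hq2
  have hp0 : p - 1 ≠ 0 := sub_ne_zero.2 (ne_of_gt hp1)
  have hα0 : q + 1 - p ≠ 0 := ne_of_gt hα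
  obtain ⟨hr0, hr1⟩ := hr
  set ffinf : ℝ → ℝ := fun s => s ^ ((1 - (N:ℝ)) / (p - 1))
      * ((bparam N p q)⁻¹ * s ^ ((q + 1 - p) * bparam N p q / (p - 1))) ^ (-(1 / (q + 1 - p)))
    with hffinf
  have hbpos : ∀ s : ℝ, 0 < s → 0 < (bparam N p q)⁻¹ * s ^ ((q + 1 - p) * bparam N p q / (p - 1)) :=
    fun s hs => mul_pos (inv_pos.2 hb) (Real.rpow_pos_of_pos hs _)
  have hsub : Set.uIoc r 1 ⊆ Set.Ioi 0 := fun x hx => ((lt_min hr0 one_pos).trans hx.1)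
  have hsub' : Set.uIcc r 1 ⊆ Set.Ioi 0 := fun x hx => lt_of_lt_of_le (lt_min hr0 one_pos) hx.1
  have hbc : ContinuousOn ffinf (Set.Ioi 0) := by
    intro s hs
    apply ContinuousWithinAt.mono _ (Set.subset_univ _)
    apply ContinuousAt.continuousWithinAt
    exact (Real.continuousAt_rpow_const s _ (Or.inl (ne_of_gt hs))).mul
      (((Real.continuousAt_rpow_const s _ (Or.inl (ne_of_gt hs))).const_mul _).rpow_const
        (Or.inl (hbpos s hs).ne'))
  have key : Tendsto (fun k' => ∫ s in r..(1:ℝ), ffun N p q k' s) atTop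
      (𝓝 (∫ s in r..(1:ℝ), ffinf s)) := by
    apply intervalIntegral.tendsto_integral_filter_of_dominated_convergence ffinf
    · filter_upwards [eventually_gt_atTop (0:ℝ)] with k' hk'
      exact (((ffun_contOn hN hp1 hpN hq1 hq2 hk').mono hsub).aestronglyMeasurable
        measurableSet_uIoc)
    · filter_upwards [eventually_gt_atTop (0:ℝ)] with k' hk'
      apply Filter.Eventually.of_forall
      intro s hs
      have hs0 : 0 < s := hsub hs
      rw [Real.norm_eq_abs, abs_of_pos (ffun_pos hN hp1 hpN hq1 hq2 hk' hs0)]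
      unfold ffun
      apply mul_le_mul_of_nonneg_left _ (Real.rpow_nonneg hs0.le _)
      apply Real.rpow_le_rpow_of_nonpos (hbpos s hs0)
      · exact le_add_of_nonneg_right (Real.rpow_nonneg hk'.le _)
      · have : 0 < 1 / (q + 1 - p) := by positivity
        linarith
    · exact (hbc.mono hsub').intervalIntegrable
    · apply Filter.Eventually.of_forall
      intro s hs
      have hs0 : 0 < s := hsub hs
      have hC := hbpos s hs0
      have h1 : Tendsto (fun k' : ℝ => k' ^ (p - 1 - q)) atTop (𝓝 0) := by
        rw [show p - 1 - q = -(q - (p - 1)) by ring]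
        exact tendsto_rpow_neg_atTop (by linarith)
      have h2' : Tendsto (fun k' : ℝ => gfun N p q k' s) atTop
          (𝓝 ((bparam N p q)⁻¹ * s ^ ((q + 1 - p) * bparam N p q / (p - 1)) + 0)) :=
        tendsto_const_nhds.add h1
      rw [add_zero] at h2'
      have h2 := h2'
      have h3 := ((Real.continuousAt_rpow_const _ (-(1 / (q + 1 - p)))
        (Or.inl hC.ne')).tendsto.comp h2)
      have h4 := h3.const_mul (s ^ ((1 - (N:ℝ)) / (p - 1)))
      exact h4
  have hexp : (1 - (N:ℝ)) / (p - 1)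
      + ((q + 1 - p) * bparam N p q / (p - 1)) * (-(1 / (q + 1 - p)))
      = -((p - q) / (q + 1 - p)) - 1 := by
    unfold bparam
    field_simp
    ring
  have hβ : 0 < (p - q) / (q + 1 - p) := div_pos (by linarith) hα
  have hval : ∫ s in r..(1:ℝ), ffinf s
      = ((p - q) / (q + 1 - p))⁻¹ * (bparam N p q) ^ (1 / (q + 1 - p))
        * (r ^ (-((p - q) / (q + 1 - p))) - 1) := by
    have hcongr : Set.EqOn ffinf (fun s => (bparam N p q) ^ (1 / (q + 1 - p))
        * s ^ (-((p - q) / (q + 1 - p)) - 1)) (Set.uIcc r 1) := by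
      intro s hs
      have hs0 : 0 < s := hsub' hs
      rw [hffinf]
      simp only
      rw [Real.mul_rpow (inv_nonneg.2 hb.le) (Real.rpow_nonneg hs0.le _),
        Real.inv_rpow hb.le, ← Real.rpow_neg hb.le, neg_neg,
        ← Real.rpow_mul hs0.le, ← mul_assoc, mul_right_comm, ← Real.rpow_add hs0, hexp, mul_comm]
    rw [intervalIntegral.integral_congr hcongr, intervalIntegral.integral_const_mul,
      integral_rpow]
    · rw [Real.one_rpow, show -((p - q) / (q + 1 - p)) - 1 + 1 = -((p - q) / (q + 1 - p)) by ring]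
      rw [div_neg, ← neg_div, neg_sub, div_eq_inv_mul]
      ring
    · refine Or.inr ⟨fun h => ?_, fun h => ?_⟩
      · have h0 : (p - q) / (q + 1 - p) = 0 := by linarith
        exact (ne_of_gt hβ) h0
      · exact lt_irrefl (0:ℝ) (hsub' h)
  rw [show (fun k' => uFam N p q k' r) = fun k' => ∫ s in r..(1:ℝ), ffun N p q k' s from rfl,
    ← hval]
  exact key

lemma part_c {k : ℝ} (hk : 0 < k) :
    Tendsto (fun r => uFam N p q k r / muRad N p r) (𝓝[>] (0:ℝ)) (𝓝 k) := by
  have hb := bparam_pos hN hp1 hpN hq1 hq2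
  have hα := alpha_pos hN hp1 hpN hq1 hq2
  have hN1 : (1:ℝ) < (N:ℝ) := NR_pos hN hp1 hpN hq1 hq2
  have hp0 : p - 1 ≠ 0 := sub_ne_zero.2 (ne_of_gt hp1)
  have hα0 : q + 1 - p ≠ 0 := ne_of_gt hα
  set ν : ℝ := (1 - (N:ℝ)) / (p - 1) with hν
  -- f s / g s → k
  have he : 0 < (q + 1 - p) * bparam N p q / (p - 1) := by
    apply div_pos (mul_pos hα hb); linarith
  have h0e : Tendsto (fun s : ℝ => s ^ ((q + 1 - p) * bparam N p q / (p - 1)))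
      (𝓝[>] (0:ℝ)) (𝓝 0) := by
    have hcont := (Real.continuousAt_rpow_const 0 _ (Or.inr he.le)).tendsto
    rw [Real.zero_rpow (ne_of_gt he)] at hcont
    exact hcont.mono_left nhdsWithin_le_nhds
  have hgg : Tendsto (fun s => gfun N p q k s) (𝓝[>] (0:ℝ)) (𝓝 (k ^ (p - 1 - q))) := by
    have h := (h0e.const_mul (bparam N p q)⁻¹).add_const (k ^ (p - 1 - q))
    rw [mul_zero, zero_add] at h
    exact h
  have hkpow : 0 < k ^ (p - 1 - q) := Real.rpow_pos_of_pos hk _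
  have h2 : Tendsto (fun s => gfun N p q k s ^ (-(1 / (q + 1 - p)))) (𝓝[>] (0:ℝ))
      (𝓝 ((k ^ (p - 1 - q)) ^ (-(1 / (q + 1 - p))))) :=
    ((Real.continuousAt_rpow_const _ _ (Or.inl hkpow.ne')).tendsto).comp hgg
  have hkk : (k ^ (p - 1 - q)) ^ (-(1 / (q + 1 - p))) = k := by
    rw [← Real.rpow_mul hk.le, show (p - 1 - q) * (-(1 / (q + 1 - p))) = 1 by field_simp; ring,
      Real.rpow_one]
  rw [hkk] at h2
  have h_fg : Tendsto (fun s => ffun N p q k s / s ^ ν) (𝓝[>] (0:ℝ)) (𝓝 k) := by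
    apply h2.congr'
    filter_upwards [self_mem_nhdsWithin] with s hs
    have hs0 : (0:ℝ) < s := hs
    have hsν : s ^ ν ≠ 0 := (Real.rpow_pos_of_pos hs0 _).ne'
    rw [show ffun N p q k s = s ^ ν * gfun N p q k s ^ (-(1 / (q + 1 - p))) from rfl,
      mul_comm, mul_div_assoc, div_self hsν, mul_one]
  have hgcont : ∀ s : ℝ, 0 < s → ContinuousAt (fun s : ℝ => s ^ ν) s := fun s hs =>
    Real.continuousAt_rpow_const s _ (Or.inl hs.ne')
  have hgpos' : ∀ s : ℝ, 0 < s → 0 < s ^ ν := fun s hs => Real.rpow_pos_of_pos hs _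
  have hfcont : ∀ s : ℝ, 0 < s → ContinuousAt (ffun N p q k) s := fun s hs =>
    ffun_contAt hN hp1 hpN hq1 hq2 hk hs
  clear_value ν
  rcases lt_or_eq_of_le hpN with hplt | hpeq
  · -- case p < N
    have hd' : ν + 1 = (p - (N:ℝ)) / (p - 1) := by rw [hν]; field_simp; ring
    have hdneg : ν + 1 < 0 := by
      rw [hd']; apply div_neg_of_neg_of_pos (by linarith) (by linarith)
    have hν1 : ν ≠ -1 := by intro h; rw [h] at hdneg; norm_num at hdneg
    have hGeq : ∀ r : ℝ, 0 < r → (∫ s in r..(1:ℝ), s ^ ν) = (1 - r ^ (ν + 1)) / (ν + 1) := by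
      intro r hr
      rw [integral_rpow (Or.inr ⟨hν1, fun h => absurd h.1 (not_le.mpr (lt_min hr one_pos))⟩),
        Real.one_rpow]
    -- r ^ (ν+1) → atTop
    have hposX : Tendsto (fun r : ℝ => r ^ (-(ν + 1))) (𝓝[>] (0:ℝ)) (𝓝[>] 0) := by
      apply tendsto_nhdsWithin_of_tendsto_nhds_of_eventually_within
      · have hcont := (Real.continuousAt_rpow_const 0 (-(ν + 1))
          (Or.inr (by linarith))).tendsto
        rw [Real.zero_rpow (by linarith)] at hcont
        exact hcont.mono_left nhdsWithin_le_nhds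
      · exact eventually_nhdsWithin_of_forall (fun s hs => Real.rpow_pos_of_pos hs _)
    have hX : Tendsto (fun r : ℝ => r ^ (ν + 1)) (𝓝[>] (0:ℝ)) atTop := by
      apply hposX.inv_tendsto_nhdsGT_zero.congr'
      filter_upwards [self_mem_nhdsWithin] with s hs
      have : (0:ℝ) < s := hs
      simp only [Pi.inv_apply]
      rw [← Real.rpow_neg this.le, neg_neg]
    have hG : Tendsto (fun r => ∫ s in r..(1:ℝ), s ^ ν) (𝓝[>] (0:ℝ)) atTop := by
      have h1 : Tendsto (fun r : ℝ => (r ^ (ν + 1) - 1) * (-(ν + 1))⁻¹) (𝓝[>] (0:ℝ)) atTop :=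
        (tendsto_atTop_add_const_right _ (-1) hX).atTop_mul_const
          (inv_pos.2 (by linarith))
      apply h1.congr'
      filter_upwards [self_mem_nhdsWithin] with r hr
      rw [hGeq r hr]
      rw [inv_neg, mul_neg, ← neg_mul, neg_sub, div_eq_mul_inv]
    have hA : Tendsto (fun r => uFam N p q k r / (∫ s in r..(1:ℝ), s ^ ν))
        (𝓝[>] (0:ℝ)) (𝓝 k) := by
      have := ratio_tendsto hfcont hgcont hgpos' hG h_fg
      simp only [← uFam_eq] at this
      exact this
    have hmu : ∀ r : ℝ, muRad N p r = (p - 1) / ((N:ℝ) - p) * r ^ (ν + 1) := by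
      intro r
      rw [muRad, if_pos hplt, hd']
    have hrinv : Tendsto (fun r : ℝ => (r ^ (ν + 1))⁻¹) (𝓝[>] (0:ℝ)) (𝓝 0) := by
      apply Tendsto.congr' _ (hposX.mono_right nhdsWithin_le_nhds)
      filter_upwards [self_mem_nhdsWithin] with s hs
      have : (0:ℝ) < s := hs
      rw [← Real.rpow_neg this.le]
    have hB : Tendsto (fun r => (∫ s in r..(1:ℝ), s ^ ν) / muRad N p r)
        (𝓝[>] (0:ℝ)) (𝓝 1) := by
      have h1 : Tendsto (fun r : ℝ => 1 - (r ^ (ν + 1))⁻¹) (𝓝[>] (0:ℝ)) (𝓝 1) := by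
        have := tendsto_const_nhds (x := (1:ℝ)) (f := 𝓝[>] (0:ℝ)) |>.sub hrinv
        rw [sub_zero] at this
        exact this
      apply h1.congr'
      filter_upwards [self_mem_nhdsWithin] with r hr
      have hr0 : (0:ℝ) < r := hr
      rw [hGeq r hr0, hmu r]
      have hX0 : r ^ (ν + 1) ≠ 0 := (Real.rpow_pos_of_pos hr0 _).ne'
      have hNp : (N:ℝ) - p ≠ 0 := by linarith
      have hd0 : ν + 1 ≠ 0 := ne_of_lt hdneg
      have hcinv : (p - 1) / ((N:ℝ) - p) = -(ν + 1)⁻¹ := by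
        rw [hd', inv_div, ← div_neg, neg_sub]
      rw [hcinv, div_div, neg_mul, mul_neg, ← mul_assoc, mul_inv_cancel₀ hd0, one_mul,
        div_neg, sub_div, div_self hX0, one_div, neg_sub]
    have hmul := hA.mul hB
    rw [mul_one] at hmul
    apply hmul.congr'
    filter_upwards [hG.eventually (eventually_ge_atTop (1:ℝ)), self_mem_nhdsWithin]
      with r hG1 hr
    have hGne : (∫ s in r..(1:ℝ), s ^ ν) ≠ 0 := by linarith
    rw [div_mul_div_comm, mul_comm (uFam N p q k r), mul_div_mul_left _ _ hGne]
  · -- case p = N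
    have hνm1 : ν = -1 := by
      rw [hν, ← hpeq, div_eq_iff hp0]; ring
    have hGeq : ∀ r : ℝ, 0 < r → (∫ s in r..(1:ℝ), s ^ ν) = -Real.log r := by
      intro r hr
      rw [hνm1]
      rw [intervalIntegral.integral_congr (g := fun s : ℝ => s⁻¹)
        (fun x _ => Real.rpow_neg_one x)]
      rw [integral_inv (fun h => absurd h.1 (not_le.mpr (lt_min hr one_pos))), one_div,
        Real.log_inv]
    have hμeq : ∀ r : ℝ, muRad N p r = -Real.log r := by
      intro r
      rw [muRad, if_neg (by rw [hpeq]; exact lt_irrefl _)]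
    have hG : Tendsto (fun r => ∫ s in r..(1:ℝ), s ^ ν) (𝓝[>] (0:ℝ)) atTop := by
      have h1 : Tendsto (fun r : ℝ => -Real.log r) (𝓝[>] (0:ℝ)) atTop :=
        tendsto_neg_atBot_atTop.comp Real.tendsto_log_nhdsGT_zero
      apply h1.congr'
      filter_upwards [self_mem_nhdsWithin] with r hr
      exact (hGeq r hr).symm
    have hA : Tendsto (fun r => uFam N p q k r / (∫ s in r..(1:ℝ), s ^ ν))
        (𝓝[>] (0:ℝ)) (𝓝 k) := by
      have := ratio_tendsto hfcont hgcont hgpos' hG h_fg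
      simp only [← uFam_eq] at this
      exact this
    apply hA.congr'
    filter_upwards [self_mem_nhdsWithin] with r hr
    rw [hGeq r hr, hμeq r]

end Main

/-- Existence and properties of the radial solutions `u_k` with singularity `k μ_p` at `0`. -/
theorem uFam_properties (N : ℕ) (hN : 2 ≤ N) (p q : ℝ) (hp1 : 1 < p) (hpN : p ≤ N)
    (hq1 : p - 1 < q) (hq2 : q < (N : ℝ) * (p - 1) / ((N : ℝ) - 1)) (k : ℝ) (hk : 0 < k) :
    IsRadialSolution N p q (Set.Ioo 0 1) (uFam N p q k) ∧
    (∀ r ∈ Set.Ioo (0 : ℝ) 1, 0 < uFam N p q k r) ∧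
    uFam N p q k 1 = 0 ∧
    Filter.Tendsto (fun r => uFam N p q k r / muRad N p r) (nhdsWithin 0 (Set.Ioi 0))
      (nhds k) ∧
    ∀ r ∈ Set.Ioo (0 : ℝ) 1,
      StrictMonoOn (fun k' => uFam N p q k' r) (Set.Ioi 0) ∧
      Filter.Tendsto (fun k' => uFam N p q k' r) Filter.atTop
        (nhds (((p - q) / (q + 1 - p))⁻¹
            * (((N : ℝ) * (p - 1) - ((N : ℝ) - 1) * q) / (q + 1 - p)) ^ (1 / (q + 1 - p))
            * (r ^ (-((p - q) / (q + 1 - p))) - 1))) := by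
  refine ⟨part_a hN hp1 hpN hq1 hq2 hk,
    fun r hr => part_b hN hp1 hpN hq1 hq2 hk hr, ?_, part_c hN hp1 hpN hq1 hq2 hk,
    fun r hr => ⟨part_d_mono hN hp1 hpN hq1 hq2 hr, part_d_lim hN hp1 hpN hq1 hq2 hr⟩⟩
  rw [uFam_eq]
  exact intervalIntegral.integral_same
end

section
/- Let N ≥ 2, 1 < p < N and p − 1 < q < q_c, and let u be a radial solution of (R) on (0,∞) with u(r) ≥ 0 for all r > 0. Then at least one of the following holds: (i) u is constant on (0,∞); (ii) there exist k > 0 and M ≥ 0 such that u(r) = ∫_r^∞ s^{(1−N)/(p−1)} ( b^{−1} s^{(q+1−p)b/(p−1)} + k^{p−1−q} )^{−1/(q+1−p)} ds + M for all r > 0; (iii) there exists M ≥ 0 such that u(r) = λ_{N,p,q} r^{−β_q} + M for all r > 0. -/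
open Metric Set Filter Topology MeasureTheory

set_option maxHeartbeats 1000000

lemma constOn_of_hasDerivAt_zero {S : Set ℝ} (hS : Convex ℝ S) (hSo : IsOpen S)
    {f : ℝ → ℝ} (hf : ∀ x ∈ S, HasDerivAt f 0 x) :
    ∀ x ∈ S, ∀ y ∈ S, f x = f y := by
  intro x hx y hy
  refine hS.is_const_of_fderivWithin_eq_zero
    (fun z hz => ((hf z hz).differentiableAt).differentiableWithinAt) ?_ hx hy
  intro z hz
  rw [fderivWithin_of_isOpen hSo hz]
  have h := (hf z hz).hasFDerivAt
  have h0 : (ContinuousLinearMap.toSpanSingleton ℝ (0:ℝ)) = 0 := by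
    ext t; simp
  rw [h0] at h
  exact h.fderiv

/-- Key integration lemma: on a convex open region where `deriv u` has constant sign `s`,
the quantity `|u'|^{-(q+1-p)}` equals `C r^θ - s b⁻¹ r`. -/
lemma keyA (N : ℕ) (p q : ℝ) (u : ℝ → ℝ)
    (hp1' : 0 < p - 1) (hqp1 : 0 < q + 1 - p) (hN1 : (0:ℝ) < (N:ℝ) - 1)
    (hθlt : ((N:ℝ)-1) * (q+1-p) / (p-1) < 1)
    (hode : ∀ r ∈ Set.Ioi (0:ℝ),
      DifferentiableAt ℝ (fun s => |deriv u s| ^ (p - 2) * deriv u s) r ∧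
      deriv (fun s => |deriv u s| ^ (p - 2) * deriv u s) r
        + (((N : ℝ) - 1) / r) * (|deriv u r| ^ (p - 2) * deriv u r)
        - |deriv u r| ^ q = 0)
    {S : Set ℝ} (hS : Convex ℝ S) (hSo : IsOpen S) (hSsub : S ⊆ Set.Ioi (0:ℝ))
    {s : ℝ} (hs : s = 1 ∨ s = -1) (hsv : ∀ r ∈ S, 0 < s * deriv u r) :
    ∃ C : ℝ, ∀ r ∈ S, |deriv u r| ^ (-(q+1-p))
      = C * r ^ (((N:ℝ)-1) * (q+1-p) / (p-1))
        - s * (((N:ℝ)*(p-1) - ((N:ℝ)-1)*q)/(q+1-p))⁻¹ * r := by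
  classical
  set v : ℝ → ℝ := deriv u with hv
  set w : ℝ → ℝ := fun t => |v t| ^ (p - 2) * v t with hw
  set θ : ℝ := ((N:ℝ)-1) * (q+1-p) / (p-1) with hθ
  set β : ℝ := (q+1-p)/(p-1) with hβ
  set D : ℝ := ((N:ℝ)*(p-1) - ((N:ℝ)-1)*q)/(q+1-p) with hD
  have hβ0 : 0 < β := div_pos hqp1 hp1'
  have hθ0 : 0 < θ := div_pos (mul_pos hN1 hqp1) hp1'
  have hDβ : D * β = 1 - θ := by
    rw [hD, hβ, hθ]; field_simp; ring
  have hDpos : 0 < D := by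
    have h1θ : 0 < 1 - θ := by linarith
    nlinarith [hDβ]
  have hss : s * s = 1 := by rcases hs with h | h <;> simp [h]
  -- sign facts and the z-value on S
  have habs : ∀ r ∈ S, |v r| = s * v r := by
    intro r hr
    have hvr : 0 < s * v r := hsv r hr
    rcases hs with h | h
    · rw [h] at hvr ⊢; rw [one_mul] at hvr ⊢; exact abs_of_pos hvr
    · rw [h] at hvr ⊢; rw [neg_one_mul] at hvr ⊢
      exact abs_of_neg (by linarith)
  have habs0 : ∀ r ∈ S, 0 < |v r| := fun r hr => (habs r hr) ▸ hsv r hr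
  have hz : ∀ r ∈ S, s * w r = |v r| ^ (p-1) := by
    intro r hr
    have h1 : s * w r = |v r| ^ (p-2) * (s * v r) := by rw [hw]; ring
    rw [h1, ← habs r hr, ← Real.rpow_add_one (habs0 r hr).ne' (p-2)]
    have he : p - 2 + 1 = p - 1 := by ring
    rw [he]
  have hz0 : ∀ r ∈ S, 0 < s * w r := by
    intro r hr
    rw [hz r hr]; exact Real.rpow_pos_of_pos (habs0 r hr) _
  -- the function F that is constant on S
  set F : ℝ → ℝ := fun t => t ^ (-θ) * (s * w t) ^ (-β) + s * D⁻¹ * t ^ (1-θ) with hF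
  have hFderiv : ∀ r ∈ S, HasDerivAt F 0 r := by
    intro r hr
    have hr0 : (0:ℝ) < r := hSsub hr
    have hzr := hz r hr
    have hzr0 := hz0 r hr
    obtain ⟨hdw, hodeq⟩ := hode r hr0
    have hwd : HasDerivAt w (deriv w r) r := by
      rw [hw, hv]; exact hdw.hasDerivAt
    set d : ℝ := deriv w r with hd
    have hdval : d = |v r| ^ q - (((N:ℝ)-1)/r) * w r := by
      have h : d + (((N:ℝ)-1)/r) * (|v r| ^ (p-2) * v r) - |v r| ^ q = 0 := hodeq
      have hwr : w r = |v r| ^ (p-2) * v r := by rw [hw]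
      rw [hwr]; linarith
    have hzd : HasDerivAt (fun t => s * w t) (s * d) r := hwd.const_mul s
    have hyd : HasDerivAt (fun t => (s * w t) ^ (-β))
        ((s * d) * (-β) * (s * w r) ^ (-β - 1)) r :=
      hzd.rpow_const (Or.inl hzr0.ne')
    have hq_eq : (s * w r) ^ (q/(p-1)) = |v r| ^ q := by
      have h : (p-1) * (q/(p-1)) = q := by field_simp
      rw [hzr, ← Real.rpow_mul (abs_nonneg _), h]
    have hyval : (s * d) * (-β) * (s * w r) ^ (-β - 1)
        = -s * β + θ / r * (s * w r) ^ (-β) := by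
      have hsd : s * d = s * (s * w r) ^ (q/(p-1)) - (((N:ℝ)-1)/r) * (s * w r) := by
        rw [hdval, hq_eq]; ring
      rw [hsd]
      have e1 : (s * w r) ^ (q/(p-1)) * (s * w r) ^ (-β - 1) = 1 := by
        rw [← Real.rpow_add hzr0]
        have h : q/(p-1) + (-β - 1) = 0 := by
          rw [hβ]; field_simp; ring
        rw [h, Real.rpow_zero]
      have e2 : (s * w r) * (s * w r) ^ (-β - 1) = (s * w r) ^ (-β) := by
        nth_rewrite 1 [← Real.rpow_one (s * w r)]
        rw [← Real.rpow_add hzr0]; ring_nf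
      have hθβ : θ = β * ((N:ℝ)-1) := by rw [hθ, hβ]; ring
      calc (s * (s * w r) ^ (q/(p-1)) - (((N:ℝ)-1)/r) * (s * w r)) * (-β) * (s * w r) ^ (-β-1)
          = -β * s * ((s * w r) ^ (q/(p-1)) * (s * w r) ^ (-β-1))
            + β * (((N:ℝ)-1)/r) * ((s * w r) * (s * w r) ^ (-β-1)) := by ring
        _ = -β * s + β * (((N:ℝ)-1)/r) * (s * w r) ^ (-β) := by rw [e1, e2]; ring
        _ = -s * β + θ / r * (s * w r) ^ (-β) := by rw [hθβ]; ring
    rw [hyval] at hyd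
    have h1 : HasDerivAt (fun t : ℝ => t ^ (-θ)) (-θ * r ^ (-θ - 1)) r :=
      Real.hasDerivAt_rpow_const (Or.inl hr0.ne')
    have h2 : HasDerivAt (fun t : ℝ => t ^ (1-θ)) ((1-θ) * r ^ (1-θ-1)) r :=
      Real.hasDerivAt_rpow_const (Or.inl hr0.ne')
    have hFd : HasDerivAt F
        ((-θ * r ^ (-θ - 1)) * (s * w r) ^ (-β)
          + r ^ (-θ) * (-s * β + θ / r * (s * w r) ^ (-β))
          + s * D⁻¹ * ((1-θ) * r ^ (1-θ-1))) r := by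
      have := (h1.mul hyd).add (h2.const_mul (s * D⁻¹))
      exact this
    convert hFd using 1
    have hr1 : r ^ (-θ - 1) = r ^ (-θ) * r⁻¹ := by
      rw [← Real.rpow_neg_one r, ← Real.rpow_add hr0]; ring_nf
    have hr2 : r ^ (1-θ-1) = r ^ (-θ) := by congr 1; ring
    have hDi : D⁻¹ * (1-θ) = β := by
      field_simp
      rw [mul_comm] at hDβ
      linarith [hDβ]
    rw [hr1, hr2]
    have expand : -θ * (r ^ (-θ) * r⁻¹) * (s * w r) ^ (-β)
          + r ^ (-θ) * (-s * β + θ / r * (s * w r) ^ (-β))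
          + s * D⁻¹ * ((1-θ) * r ^ (-θ))
        = r ^ (-θ) * (θ * (s * w r) ^ (-β) * (r⁻¹ - r⁻¹))
          + r ^ (-θ) * s * (D⁻¹ * (1-θ) - β) := by
      field_simp; ring
    rw [expand, hDi]; simp
  -- F is constant on S
  rcases S.eq_empty_or_nonempty with rfl | ⟨r₀, hr₀⟩
  · exact ⟨0, by simp⟩
  have hconst := constOn_of_hasDerivAt_zero hS hSo hFderiv
  refine ⟨F r₀, ?_⟩
  intro r hr
  have hr0 : 0 < r := hSsub hr
  have hFr : F r = F r₀ := hconst r hr r₀ hr₀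
  have hY : |v r| ^ (-(q+1-p)) = (s * w r) ^ (-β) := by
    rw [hz r hr, ← Real.rpow_mul (abs_nonneg _)]
    congr 1
    rw [hβ]; field_simp
  have e1 : r ^ θ * r ^ (-θ) = 1 := by
    rw [← Real.rpow_add hr0]; norm_num
  have e2 : r ^ θ * r ^ (1-θ) = r := by
    rw [← Real.rpow_add hr0]; norm_num
  have hFrval : r ^ (-θ) * (s * w r) ^ (-β) + s * D⁻¹ * r ^ (1-θ) = F r₀ := hFr
  rw [hY]
  calc (s * w r) ^ (-β)
      = (r ^ θ * r ^ (-θ)) * (s * w r) ^ (-β) := by rw [e1]; ring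
    _ = r ^ θ * (r ^ (-θ) * (s * w r) ^ (-β) + s * D⁻¹ * r ^ (1-θ))
        - s * D⁻¹ * (r ^ θ * r ^ (1-θ)) := by ring
    _ = F r₀ * r ^ θ - s * D⁻¹ * r := by rw [hFrval, e2]; ring

/-- Classification of nonnegative global radial solutions. -/
theorem global_radial_classification (N : ℕ) (hN : 2 ≤ N) (p q : ℝ) (hp1 : 1 < p)
    (hpN : p < N) (hq1 : p - 1 < q) (hq2 : q < (N : ℝ) * (p - 1) / ((N : ℝ) - 1))
    (u : ℝ → ℝ) (hu : IsRadialSolution N p q (Set.Ioi 0) u)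
    (hpos : ∀ r > (0 : ℝ), 0 ≤ u r) :
    (∃ M : ℝ, ∀ r > (0 : ℝ), u r = M) ∨
    (∃ k > (0 : ℝ), ∃ M ≥ (0 : ℝ), ∀ r > (0 : ℝ),
      u r = (∫ s in Set.Ioi r,
          s ^ ((1 - (N : ℝ)) / (p - 1)) *
            ((((N : ℝ) * (p - 1) - ((N : ℝ) - 1) * q) / (q + 1 - p))⁻¹
                * s ^ ((q + 1 - p) * (((N : ℝ) * (p - 1) - ((N : ℝ) - 1) * q) / (q + 1 - p))
                    / (p - 1))
              + k ^ (p - 1 - q)) ^ (-(1 / (q + 1 - p)))) + M) ∨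
    (∃ M ≥ (0 : ℝ), ∀ r > (0 : ℝ),
      u r = ((p - q) / (q + 1 - p))⁻¹
          * (((N : ℝ) * (p - 1) - ((N : ℝ) - 1) * q) / (q + 1 - p)) ^ (1 / (q + 1 - p))
          * r ^ (-((p - q) / (q + 1 - p))) + M) := by
  obtain ⟨hreg, hode⟩ := hu
  -- numeric facts
  have hN2 : (2:ℝ) ≤ (N:ℝ) := by exact_mod_cast hN
  have hN1 : (0:ℝ) < (N:ℝ) - 1 := by linarith
  have hp1' : (0:ℝ) < p - 1 := by linarith
  have hqp1 : (0:ℝ) < q + 1 - p := by linarith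
  have hNq : ((N:ℝ)-1) * q < (N:ℝ) * (p-1) := by
    have h := (lt_div_iff₀ hN1).mp hq2
    linarith
  have hqltp : q < p := by nlinarith
  have hθlt : ((N:ℝ)-1) * (q+1-p) / (p-1) < 1 := by
    rw [div_lt_one hp1']; nlinarith
  have hθ0 : (0:ℝ) < ((N:ℝ)-1) * (q+1-p) / (p-1) :=
    div_pos (mul_pos hN1 hqp1) hp1'
  have hDpos : (0:ℝ) < ((N:ℝ)*(p-1) - ((N:ℝ)-1)*q)/(q+1-p) :=
    div_pos (by nlinarith) hqp1
  have hDinv : (0:ℝ) < (((N:ℝ)*(p-1) - ((N:ℝ)-1)*q)/(q+1-p))⁻¹ := inv_pos.mpr hDpos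
  have hι : (1:ℝ) < 1/(q+1-p) := by
    rw [lt_div_iff₀ hqp1]; linarith
  -- regularity
  have hvcont : ContinuousOn (deriv u) (Set.Ioi 0) :=
    hreg.continuousOn_deriv_of_isOpen isOpen_Ioi le_rfl
  have hud : ∀ r ∈ Set.Ioi (0:ℝ), HasDerivAt u (deriv u r) r := fun r hr =>
    ((hreg.differentiableOn one_ne_zero).differentiableAt (isOpen_Ioi.mem_nhds hr)).hasDerivAt
  -- sign facts for w
  have hwpos : ∀ r : ℝ, 0 < deriv u r → 0 < |deriv u r| ^ (p-2) * deriv u r := fun r h =>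
    mul_pos (Real.rpow_pos_of_pos (abs_pos.mpr h.ne') _) h
  have hwneg : ∀ r : ℝ, deriv u r < 0 → |deriv u r| ^ (p-2) * deriv u r < 0 := fun r h =>
    mul_neg_of_pos_of_neg (Real.rpow_pos_of_pos (abs_pos.mpr h.ne) _) h
  have hwle : ∀ r : ℝ, deriv u r ≤ 0 → |deriv u r| ^ (p-2) * deriv u r ≤ 0 := by
    intro r h
    rcases lt_or_eq_of_le h with h' | h'
    · exact (hwneg r h').le
    · rw [h', mul_zero]
  -- W = r^(N-1) * w is monotone
  have hWd : ∀ x ∈ Set.Ioi (0:ℝ),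
      HasDerivAt (fun t => t ^ ((N:ℝ)-1) * (|deriv u t| ^ (p-2) * deriv u t))
        (x ^ ((N:ℝ)-1) * |deriv u x| ^ q) x := by
    intro x hx
    have hx0 : (0:ℝ) < x := hx
    obtain ⟨hdw, hodeq⟩ := hode x hx
    have h1 : HasDerivAt (fun t : ℝ => t ^ ((N:ℝ)-1))
        (((N:ℝ)-1) * x ^ ((N:ℝ)-1-1)) x :=
      Real.hasDerivAt_rpow_const (Or.inl hx0.ne')
    have h2 := h1.mul hdw.hasDerivAt
    refine HasDerivAt.congr_deriv h2 ?_
    have hodq : deriv (fun s => |deriv u s| ^ (p - 2) * deriv u s) x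
        = |deriv u x| ^ q - (((N:ℝ)-1)/x) * (|deriv u x| ^ (p-2) * deriv u x) := by
      linarith [hodeq]
    rw [hodq]
    have hxs : x ^ ((N:ℝ)-1-1) = x ^ ((N:ℝ)-1) * x⁻¹ := by
      rw [show ((N:ℝ)-1-1) = ((N:ℝ)-1) + (-1) by ring, Real.rpow_add hx0, Real.rpow_neg_one]
    rw [hxs]
    field_simp
    ring
  have hWmono : MonotoneOn (fun t => t ^ ((N:ℝ)-1) * (|deriv u t| ^ (p-2) * deriv u t))
      (Set.Ioi 0) := by
    apply monotoneOn_of_deriv_nonneg (convex_Ioi 0)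
    · intro x hx
      exact ((hWd x hx).continuousAt).continuousWithinAt
    · rw [interior_Ioi]
      exact fun x hx => ((hWd x hx).differentiableAt).differentiableWithinAt
    · rw [interior_Ioi]
      intro x hx
      rw [(hWd x hx).deriv]
      exact mul_nonneg (Real.rpow_nonneg (le_of_lt hx) _) (Real.rpow_nonneg (abs_nonneg _) _)
  -- Step 1: the derivative is never positive
  have hvle : ∀ r ∈ Set.Ioi (0:ℝ), deriv u r ≤ 0 := by
    by_contra hcon
    push_neg at hcon
    obtain ⟨r0, hr0, hvr0⟩ := hcon
    have hvpos : ∀ r ∈ Set.Ioi r0, 0 < deriv u r := by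
      intro r hr
      have hr0' : (0:ℝ) < r := lt_trans hr0 hr
      have hmono := hWmono (Set.mem_Ioi.mpr hr0) (Set.mem_Ioi.mpr hr0') (le_of_lt hr)
      dsimp only at hmono
      have hW0 : 0 < r0 ^ ((N:ℝ)-1) * (|deriv u r0| ^ (p-2) * deriv u r0) :=
        mul_pos (Real.rpow_pos_of_pos hr0 _) (hwpos r0 hvr0)
      by_contra hle
      push_neg at hle
      have hWr : r ^ ((N:ℝ)-1) * (|deriv u r| ^ (p-2) * deriv u r) ≤ 0 :=
        mul_nonpos_of_nonneg_of_nonpos (Real.rpow_nonneg hr0'.le _) (hwle r hle)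
      linarith
    obtain ⟨C, hC⟩ := keyA N p q u hp1' hqp1 hN1 hθlt hode (convex_Ioi r0) isOpen_Ioi
      (fun x hx => Set.mem_Ioi.mpr (lt_trans hr0 hx)) (Or.inl rfl)
      (fun r hr => by rw [one_mul]; exact hvpos r hr)
    have htend : Tendsto (fun r : ℝ => C * r ^ (((N:ℝ)-1)*(q+1-p)/(p-1) - 1)) atTop (𝓝 0) := by
      have h := tendsto_rpow_neg_atTop
        (show (0:ℝ) < 1 - ((N:ℝ)-1)*(q+1-p)/(p-1) by linarith)
      have h2 : ∀ r : ℝ, r ^ (-(1 - ((N:ℝ)-1)*(q+1-p)/(p-1)))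
          = r ^ (((N:ℝ)-1)*(q+1-p)/(p-1) - 1) := by
        intro r; congr 1; ring
      have h3 := h.const_mul C
      rw [mul_zero] at h3
      exact h3.congr (fun r => by rw [h2 r])
    have hev : ∀ᶠ r in atTop,
        C * r ^ (((N:ℝ)-1)*(q+1-p)/(p-1) - 1) < (((N:ℝ)*(p-1) - ((N:ℝ)-1)*q)/(q+1-p))⁻¹ :=
      htend.eventually_lt_const hDinv
    obtain ⟨r, hrev, hrr0⟩ := (hev.and (eventually_gt_atTop r0)).exists
    have hr0' : (0:ℝ) < r := lt_trans hr0 hrr0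
    have hlhs : 0 < |deriv u r| ^ (-(q+1-p)) :=
      Real.rpow_pos_of_pos (abs_pos.mpr (hvpos r hrr0).ne') _
    have hkey := hC r hrr0
    have heq : (((N:ℝ)-1)*(q+1-p)/(p-1) - 1) + 1 = ((N:ℝ)-1)*(q+1-p)/(p-1) := by ring
    have hsplit : r ^ (((N:ℝ)-1)*(q+1-p)/(p-1) - 1) * r = r ^ (((N:ℝ)-1)*(q+1-p)/(p-1)) := by
      rw [← Real.rpow_add_one hr0'.ne' _, heq]
    rw [← hsplit] at hkey
    nlinarith [hkey, hrev, hlhs, hr0']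
  -- Step 2: dichotomy: u' ≡ 0 or u' < 0 everywhere
  by_cases hex : ∃ r ∈ Set.Ioi (0:ℝ), deriv u r < 0
  case neg =>
    push_neg at hex
    left
    have hv0 : ∀ x ∈ Set.Ioi (0:ℝ), HasDerivAt u 0 x := by
      intro x hx
      have h0 : deriv u x = 0 := le_antisymm (hvle x hx) (hex x hx)
      have h := hud x hx
      rwa [h0] at h
    have hconst := constOn_of_hasDerivAt_zero (convex_Ioi 0) isOpen_Ioi hv0
    exact ⟨u 1, fun r hr => hconst r hr 1 (by norm_num)⟩
  case pos =>
  obtain ⟨r1, hr1, hvr1⟩ := hex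
  have hvneg : ∀ r ∈ Set.Ioi (0:ℝ), deriv u r < 0 := by
    by_contra hcon
    push_neg at hcon
    obtain ⟨r2, hr2, hv2'⟩ := hcon
    have hv2 : deriv u r2 = 0 := le_antisymm (hvle r2 hr2) hv2'
    rcases le_or_gt r2 r1 with hle | hlt
    · have hmono := hWmono hr2 hr1 hle
      dsimp only at hmono
      have hW2 : r2 ^ ((N:ℝ)-1) * (|deriv u r2| ^ (p-2) * deriv u r2) = 0 := by
        rw [hv2, mul_zero, mul_zero]
      have hW1 : r1 ^ ((N:ℝ)-1) * (|deriv u r1| ^ (p-2) * deriv u r1) < 0 :=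
        mul_neg_of_pos_of_neg (Real.rpow_pos_of_pos hr1 _) (hwneg r1 hvr1)
      linarith
    · -- r1 < r2 : take the first zero after r1
      have hIccsub : Set.Icc r1 r2 ⊆ Set.Ioi (0:ℝ) := fun t ht => lt_of_lt_of_le hr1 ht.1
      set T := {t : ℝ | t ∈ Set.Icc r1 r2 ∧ deriv u t = 0} with hTdef
      have hTne : T.Nonempty := ⟨r2, ⟨hlt.le, le_refl r2⟩, hv2⟩
      have hTbdd : BddBelow T := ⟨r1, fun t ht => ht.1.1⟩
      have hTclosed : IsClosed T := by
        have hTeq : T = Set.Icc r1 r2 ∩ deriv u ⁻¹' {0} := by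
          ext t; simp [hTdef, Set.mem_Icc]
        rw [hTeq]
        exact (hvcont.mono hIccsub).preimage_isClosed_of_isClosed isClosed_Icc isClosed_singleton
      set r3 := sInf T with hr3def
      have hr3T : r3 ∈ T := hTclosed.csInf_mem hTne hTbdd
      have hr3Icc : r3 ∈ Set.Icc r1 r2 := hr3T.1
      have hv3 : deriv u r3 = 0 := hr3T.2
      have hr30 : (0:ℝ) < r3 := lt_of_lt_of_le hr1 hr3Icc.1
      have hr13 : r1 < r3 := by
        rcases lt_or_eq_of_le hr3Icc.1 with h | h
        · exact h
        · exfalso; rw [← h] at hv3; exact absurd hv3 hvr1.ne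
      have hvIoo : ∀ t ∈ Set.Ioo r1 r3, deriv u t < 0 := by
        intro t ht
        have ht0 : (0:ℝ) < t := lt_trans hr1 ht.1
        rcases lt_or_eq_of_le (hvle t ht0) with h | h
        · exact h
        · exfalso
          have htT : t ∈ T := ⟨⟨ht.1.le, le_trans ht.2.le hr3Icc.2⟩, h⟩
          have := csInf_le hTbdd htT
          rw [← hr3def] at this
          exact absurd this (not_le.mpr ht.2)
      obtain ⟨C, hC⟩ := keyA N p q u hp1' hqp1 hN1 hθlt hode (convex_Ioo r1 r3)
        isOpen_Ioo (fun x hx => Set.mem_Ioi.mpr (lt_trans hr1 hx.1)) (Or.inr rfl)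
        (fun r hr => by rw [neg_one_mul]; exact neg_pos.mpr (hvIoo r hr))
      -- a uniform bound for the right side
      obtain ⟨K, hKdef⟩ : ∃ K : ℝ, K = |C| * r3 ^ (((N:ℝ)-1)*(q+1-p)/(p-1))
        + (((N:ℝ)*(p-1) - ((N:ℝ)-1)*q)/(q+1-p))⁻¹ * r3 := ⟨_, rfl⟩
      have hK0 : 0 < K + 1 := by
        have h1 : 0 ≤ |C| * r3 ^ (((N:ℝ)-1)*(q+1-p)/(p-1)) :=
          mul_nonneg (abs_nonneg _) (Real.rpow_nonneg hr30.le _)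
        have h2 : 0 < (((N:ℝ)*(p-1) - ((N:ℝ)-1)*q)/(q+1-p))⁻¹ * r3 := mul_pos hDinv hr30
        rw [hKdef]; linarith
      have hKbound : ∀ r ∈ Set.Ioo r1 r3,
          C * r ^ (((N:ℝ)-1)*(q+1-p)/(p-1))
            + (((N:ℝ)*(p-1) - ((N:ℝ)-1)*q)/(q+1-p))⁻¹ * r ≤ K := by
        intro r hr
        have hrr0 : (0:ℝ) < r := lt_trans hr1 hr.1
        have h1 : C * r ^ (((N:ℝ)-1)*(q+1-p)/(p-1))
            ≤ |C| * r ^ (((N:ℝ)-1)*(q+1-p)/(p-1)) :=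
          mul_le_mul_of_nonneg_right (le_abs_self C) (Real.rpow_nonneg hrr0.le _)
        have h2 : |C| * r ^ (((N:ℝ)-1)*(q+1-p)/(p-1))
            ≤ |C| * r3 ^ (((N:ℝ)-1)*(q+1-p)/(p-1)) :=
          mul_le_mul_of_nonneg_left
            (Real.rpow_le_rpow hrr0.le hr.2.le hθ0.le) (abs_nonneg _)
        have h3 : (((N:ℝ)*(p-1) - ((N:ℝ)-1)*q)/(q+1-p))⁻¹ * r
            ≤ (((N:ℝ)*(p-1) - ((N:ℝ)-1)*q)/(q+1-p))⁻¹ * r3 :=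
          mul_le_mul_of_nonneg_left hr.2.le hDinv.le
        rw [hKdef]; linarith
      -- choose r close to r3 where |u'| is small
      set ε := (K+1) ^ (-(1/(q+1-p))) with hεdef
      have hε0 : 0 < ε := Real.rpow_pos_of_pos hK0 _
      have hca : ContinuousAt (deriv u) r3 :=
        hvcont.continuousAt (isOpen_Ioi.mem_nhds hr30)
      have hten : Tendsto (deriv u) (𝓝 r3) (𝓝 0) := by
        have h := hca.tendsto
        rwa [hv3] at h
      obtain ⟨δ, hδ0, hδ⟩ := Metric.eventually_nhds_iff.mp
        (Metric.tendsto_nhds.mp hten ε hε0)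
      set r := max ((r1+r3)/2) (r3 - δ/2) with hrdef
      have hrIoo : r ∈ Set.Ioo r1 r3 := by
        constructor
        · exact lt_of_lt_of_le (by linarith) (le_max_left _ _)
        · exact max_lt (by linarith) (by linarith)
      have hrd : dist r r3 < δ := by
        rw [Real.dist_eq, abs_of_neg (by linarith [hrIoo.2] : r - r3 < 0)]
        have := le_max_right ((r1+r3)/2) (r3 - δ/2)
        rw [← hrdef] at this
        linarith
      have hvsmall : |deriv u r| < ε := by
        have h := hδ hrd
        rwa [Real.dist_eq, sub_zero] at h
      have hvrneg := hvIoo r hrIoo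
      have habs0 : 0 < |deriv u r| := abs_pos.mpr hvrneg.ne
      have hgt : (K+1:ℝ) < |deriv u r| ^ (-(q+1-p)) := by
        have h1 := Real.rpow_lt_rpow_of_neg habs0 hvsmall
          (by linarith : -(q+1-p) < 0)
        have h2 : ε ^ (-(q+1-p)) = K+1 := by
          rw [hεdef, ← Real.rpow_mul hK0.le,
            show (-(1/(q+1-p))) * (-(q+1-p)) = 1 by field_simp, Real.rpow_one]
        linarith
      have hkey := hC r hrIoo
      have hkey' : |deriv u r| ^ (-(q+1-p))
          = C * r ^ (((N:ℝ)-1)*(q+1-p)/(p-1))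
            + (((N:ℝ)*(p-1) - ((N:ℝ)-1)*q)/(q+1-p))⁻¹ * r := by
        rw [hkey]; ring
      have hkb := hKbound r hrIoo
      linarith [hkey', hkb, hgt]
  -- Step 3: global structure on (0,∞)
  obtain ⟨C, hC⟩ := keyA N p q u hp1' hqp1 hN1 hθlt hode (convex_Ioi 0) isOpen_Ioi
    (fun x hx => hx) (Or.inr rfl)
    (fun r hr => by rw [neg_one_mul]; exact neg_pos.mpr (hvneg r hr))
  have hC' : ∀ r ∈ Set.Ioi (0:ℝ), |deriv u r| ^ (-(q+1-p))
      = C * r ^ (((N:ℝ)-1)*(q+1-p)/(p-1))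
        + (((N:ℝ)*(p-1) - ((N:ℝ)-1)*q)/(q+1-p))⁻¹ * r := by
    intro r hr
    have h := hC r hr
    linarith [h]
  -- C is nonnegative
  have hC0 : 0 ≤ C := by
    by_contra hCneg
    push_neg at hCneg
    obtain ⟨A, hAdef⟩ : ∃ A : ℝ, A = -C * (((N:ℝ)*(p-1) - ((N:ℝ)-1)*q)/(q+1-p)) := ⟨_, rfl⟩
    have hA0 : 0 < A := by rw [hAdef]; exact mul_pos (neg_pos.mpr hCneg) hDpos
    have hmin0 : 0 < min 1 A := lt_min one_pos hA0
    obtain ⟨B, hBdef⟩ : ∃ B : ℝ,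
      B = (min 1 A) ^ (1/(1 - ((N:ℝ)-1)*(q+1-p)/(p-1))) := ⟨_, rfl⟩
    have hB0 : 0 < B := by rw [hBdef]; exact Real.rpow_pos_of_pos hmin0 _
    obtain ⟨r, hrdef⟩ : ∃ r : ℝ, r = B/2 := ⟨_, rfl⟩
    have hr0 : 0 < r := by rw [hrdef]; linarith
    have hrB : r < B := by rw [hrdef]; linarith
    have hrpow : r ^ (1 - ((N:ℝ)-1)*(q+1-p)/(p-1)) < A := by
      have h1 := Real.rpow_lt_rpow hr0.le hrB (by linarith : (0:ℝ) < 1 - ((N:ℝ)-1)*(q+1-p)/(p-1))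
      have h2 : B ^ (1 - ((N:ℝ)-1)*(q+1-p)/(p-1)) = min 1 A := by
        rw [hBdef, ← Real.rpow_mul hmin0.le,
          one_div_mul_cancel (by linarith : 1 - ((N:ℝ)-1)*(q+1-p)/(p-1) ≠ 0), Real.rpow_one]
      rw [h2] at h1
      exact lt_of_lt_of_le h1 (min_le_right _ _)
    have hkey := hC' r hr0
    have hlhs : 0 < |deriv u r| ^ (-(q+1-p)) :=
      Real.rpow_pos_of_pos (abs_pos.mpr (hvneg r hr0).ne) _
    have hrsplit : r ^ ((((N:ℝ)-1)*(q+1-p)/(p-1))) * r ^ (1 - ((N:ℝ)-1)*(q+1-p)/(p-1)) = r := by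
      rw [← Real.rpow_add hr0, show (((N:ℝ)-1)*(q+1-p)/(p-1)) + (1 - ((N:ℝ)-1)*(q+1-p)/(p-1)) = 1 by ring,
        Real.rpow_one]
    have hrθ0 : 0 < r ^ ((((N:ℝ)-1)*(q+1-p)/(p-1))) := Real.rpow_pos_of_pos hr0 _
    have hDA : (((N:ℝ)*(p-1) - ((N:ℝ)-1)*q)/(q+1-p))⁻¹ * A = -C := by
      have hX0 : (0:ℝ) < (N:ℝ)*(p-1) - ((N:ℝ)-1)*q := by nlinarith
      rw [hAdef]
      field_simp
    -- RHS = r^θ * (C + D⁻¹ * r^(1-θ)) < 0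
    have hfac : (((N:ℝ)*(p-1) - ((N:ℝ)-1)*q)/(q+1-p))⁻¹ * r ^ (1 - ((N:ℝ)-1)*(q+1-p)/(p-1)) < -C := by
      calc (((N:ℝ)*(p-1) - ((N:ℝ)-1)*q)/(q+1-p))⁻¹ * r ^ (1 - ((N:ℝ)-1)*(q+1-p)/(p-1))
          < (((N:ℝ)*(p-1) - ((N:ℝ)-1)*q)/(q+1-p))⁻¹ * A := by
            exact mul_lt_mul_of_pos_left hrpow hDinv
        _ = -C := hDA
    have hprod := mul_lt_mul_of_pos_left hfac hrθ0
    have h4 : (((N:ℝ)*(p-1) - ((N:ℝ)-1)*q)/(q+1-p))⁻¹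
        * (r ^ ((((N:ℝ)-1)*(q+1-p)/(p-1))) * r ^ (1 - ((N:ℝ)-1)*(q+1-p)/(p-1)))
        = (((N:ℝ)*(p-1) - ((N:ℝ)-1)*q)/(q+1-p))⁻¹ * r := by rw [hrsplit]
    nlinarith [hkey, hlhs, hprod, h4]
  rcases eq_or_lt_of_le hC0 with hCeq | hCpos
  · -- C = 0 : the explicit singular solution (case iii)
    right; right
    have hBq : (0:ℝ) < (p-q)/(q+1-p) := div_pos (by linarith) hqp1
    have hval : ∀ r ∈ Set.Ioi (0:ℝ), deriv u r
        = -(((((N:ℝ)*(p-1) - ((N:ℝ)-1)*q)/(q+1-p))⁻¹ * r) ^ (-(1/(q+1-p)))) := by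
      intro r hr
      have hr0 : (0:ℝ) < r := hr
      have h1 := hC' r hr
      rw [← hCeq, zero_mul, zero_add] at h1
      have h2 : (|deriv u r| ^ (-(q+1-p))) ^ (-(1/(q+1-p))) = |deriv u r| := by
        rw [← Real.rpow_mul (abs_nonneg _),
          show (-(q+1-p)) * (-(1/(q+1-p))) = 1 by field_simp, Real.rpow_one]
      have h3 : |deriv u r| = ((((N:ℝ)*(p-1) - ((N:ℝ)-1)*q)/(q+1-p))⁻¹ * r) ^ (-(1/(q+1-p))) := by
        rw [← h2, h1]
      rw [show deriv u r = -|deriv u r| by rw [abs_of_neg (hvneg r hr), neg_neg], h3]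
    have hφd : ∀ t ∈ Set.Ioi (0:ℝ), HasDerivAt (fun t : ℝ =>
        ((p - q) / (q + 1 - p))⁻¹ * (((N:ℝ)*(p-1) - ((N:ℝ)-1)*q)/(q+1-p)) ^ (1/(q+1-p))
          * t ^ (-((p-q)/(q+1-p)))) (deriv u t) t := by
      intro t ht
      have ht0 : (0:ℝ) < t := ht
      have h1 : HasDerivAt (fun t : ℝ => t ^ (-((p-q)/(q+1-p))))
          ((-((p-q)/(q+1-p))) * t ^ (-((p-q)/(q+1-p)) - 1)) t :=
        Real.hasDerivAt_rpow_const (Or.inl ht0.ne')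
      have h2 := h1.const_mul (((p - q) / (q + 1 - p))⁻¹
        * (((N:ℝ)*(p-1) - ((N:ℝ)-1)*q)/(q+1-p)) ^ (1/(q+1-p)))
      refine HasDerivAt.congr_deriv h2 (Eq.symm ?_)
      rw [hval t ht]
      have h3 : ((((N:ℝ)*(p-1) - ((N:ℝ)-1)*q)/(q+1-p))⁻¹ * t) ^ (-(1/(q+1-p)))
          = (((N:ℝ)*(p-1) - ((N:ℝ)-1)*q)/(q+1-p)) ^ (1/(q+1-p)) * t ^ (-(1/(q+1-p))) := by
        rw [Real.mul_rpow (inv_nonneg.mpr hDpos.le) ht0.le, ← Real.rpow_neg_one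
            (((N:ℝ)*(p-1) - ((N:ℝ)-1)*q)/(q+1-p)), ← Real.rpow_mul hDpos.le,
          show (-1 : ℝ) * (-(1/(q+1-p))) = 1/(q+1-p) by ring]
      rw [h3]
      have hBqne : ((p-q)/(q+1-p)) ≠ 0 := ne_of_gt hBq
      have he : -((p-q)/(q+1-p)) - 1 = -(1/(q+1-p)) := by
        field_simp; ring
      rw [he]
      have hfact : ((p - q)/(q+1-p))⁻¹ * ((p-q)/(q+1-p)) = 1 := inv_mul_cancel₀ hBqne
      linear_combination ((((N:ℝ)*(p-1) - ((N:ℝ)-1)*q)/(q+1-p)) ^ (1/(q+1-p))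
        * t ^ (-(1/(q+1-p)))) * hfact
    have hud0 : ∀ x ∈ Set.Ioi (0:ℝ), HasDerivAt (fun t => u t
        - ((p - q) / (q + 1 - p))⁻¹ * (((N:ℝ)*(p-1) - ((N:ℝ)-1)*q)/(q+1-p)) ^ (1/(q+1-p))
          * t ^ (-((p-q)/(q+1-p)))) 0 x := by
      intro x hx
      have h := (hud x hx).sub (hφd x hx)
      rwa [sub_self] at h
    have hconst := constOn_of_hasDerivAt_zero (convex_Ioi 0) isOpen_Ioi hud0
    obtain ⟨M, hM⟩ : ∃ M : ℝ, ∀ r ∈ Set.Ioi (0:ℝ), u r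
        = ((p - q) / (q + 1 - p))⁻¹ * (((N:ℝ)*(p-1) - ((N:ℝ)-1)*q)/(q+1-p)) ^ (1/(q+1-p))
          * r ^ (-((p-q)/(q+1-p))) + M := by
      refine ⟨u 1 - ((p - q) / (q + 1 - p))⁻¹
        * (((N:ℝ)*(p-1) - ((N:ℝ)-1)*q)/(q+1-p)) ^ (1/(q+1-p)) * (1:ℝ) ^ (-((p-q)/(q+1-p))), ?_⟩
      intro r hr
      have h := hconst r hr 1 (by norm_num)
      linarith [h]
    have hφ0 : Tendsto (fun t : ℝ => ((p - q) / (q + 1 - p))⁻¹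
        * (((N:ℝ)*(p-1) - ((N:ℝ)-1)*q)/(q+1-p)) ^ (1/(q+1-p)) * t ^ (-((p-q)/(q+1-p))) + M)
        atTop (𝓝 (0 + M)) := by
      have h := ((tendsto_rpow_neg_atTop hBq).const_mul (((p - q) / (q + 1 - p))⁻¹
        * (((N:ℝ)*(p-1) - ((N:ℝ)-1)*q)/(q+1-p)) ^ (1/(q+1-p)))).add
        (tendsto_const_nhds (α := ℝ) (x := M) (f := atTop))
      rwa [mul_zero] at h
    have hut : Tendsto u atTop (𝓝 (0 + M)) := by
      apply Tendsto.congr' ?_ hφ0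
      filter_upwards [eventually_gt_atTop (0:ℝ)] with t ht
      exact (hM t ht).symm
    rw [zero_add] at hut
    have hM0 : 0 ≤ M := ge_of_tendsto hut
      (by filter_upwards [eventually_gt_atTop (0:ℝ)] with t ht; exact hpos t ht)
    exact ⟨M, hM0, fun r hr => hM r hr⟩
  · -- C > 0 : case (ii)
    right; left
    have hpq_ne : p - 1 - q ≠ 0 := ne_of_lt (by linarith)
    obtain ⟨k, hkdef⟩ : ∃ k : ℝ, k = C ^ (1/(p-1-q)) := ⟨_, rfl⟩
    have hk0 : 0 < k := by rw [hkdef]; exact Real.rpow_pos_of_pos hCpos _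
    have hkC : k ^ (p-1-q) = C := by
      rw [hkdef, ← Real.rpow_mul hCpos.le, one_div, inv_mul_cancel₀ hpq_ne, Real.rpow_one]
    refine ⟨k, hk0, ?_⟩
    -- inversion identity
    have hinv : ∀ s ∈ Set.Ioi (0:ℝ), |deriv u s|
        = (C * s ^ (((N:ℝ)-1)*(q+1-p)/(p-1))
            + (((N:ℝ)*(p-1) - ((N:ℝ)-1)*q)/(q+1-p))⁻¹ * s) ^ (-(1/(q+1-p))) := by
      intro s hs
      have h2 : (|deriv u s| ^ (-(q+1-p))) ^ (-(1/(q+1-p))) = |deriv u s| := by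
        rw [← Real.rpow_mul (abs_nonneg _),
          show (-(q+1-p)) * (-(1/(q+1-p))) = 1 by field_simp, Real.rpow_one]
      rw [← hC' s hs, h2]
    -- the integrand equals |u'| on (0,∞)
    have hg : ∀ s ∈ Set.Ioi (0:ℝ),
        s ^ ((1 - (N : ℝ)) / (p - 1)) *
          ((((N : ℝ) * (p - 1) - ((N : ℝ) - 1) * q) / (q + 1 - p))⁻¹
              * s ^ ((q + 1 - p) * (((N : ℝ) * (p - 1) - ((N : ℝ) - 1) * q) / (q + 1 - p)) / (p - 1))
            + k ^ (p - 1 - q)) ^ (-(1 / (q + 1 - p))) = |deriv u s| := by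
      intro s hs
      have hs0 : (0:ℝ) < s := hs
      rw [hkC]
      have hE : (q + 1 - p) * (((N : ℝ) * (p - 1) - ((N : ℝ) - 1) * q) / (q + 1 - p)) / (p - 1)
          = 1 - ((N:ℝ)-1)*(q+1-p)/(p-1) := by field_simp; ring
      rw [hE]
      have hin : 0 < (((N:ℝ)*(p-1) - ((N:ℝ)-1)*q)/(q+1-p))⁻¹
          * s ^ (1 - ((N:ℝ)-1)*(q+1-p)/(p-1)) + C :=
        add_pos (mul_pos hDinv (Real.rpow_pos_of_pos hs0 _)) hCpos
      have hB : s ^ ((1 - (N : ℝ)) / (p - 1))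
          = (s ^ (((N:ℝ)-1)*(q+1-p)/(p-1))) ^ (-(1 / (q + 1 - p))) := by
        rw [← Real.rpow_mul hs0.le]
        congr 1
        field_simp
        ring
      rw [hB, ← Real.mul_rpow (Real.rpow_nonneg hs0.le _) hin.le]
      have hss : s ^ (((N:ℝ)-1)*(q+1-p)/(p-1)) * s ^ (1 - ((N:ℝ)-1)*(q+1-p)/(p-1)) = s := by
        rw [← Real.rpow_add hs0,
          show (((N:ℝ)-1)*(q+1-p)/(p-1)) + (1 - ((N:ℝ)-1)*(q+1-p)/(p-1)) = 1 by ring,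
          Real.rpow_one]
      have hE2 : s ^ (((N:ℝ)-1)*(q+1-p)/(p-1)) *
          ((((N:ℝ)*(p-1) - ((N:ℝ)-1)*q)/(q+1-p))⁻¹ * s ^ (1 - ((N:ℝ)-1)*(q+1-p)/(p-1)) + C)
          = C * s ^ (((N:ℝ)-1)*(q+1-p)/(p-1))
            + (((N:ℝ)*(p-1) - ((N:ℝ)-1)*q)/(q+1-p))⁻¹ * s := by
        linear_combination (((N:ℝ)*(p-1) - ((N:ℝ)-1)*q)/(q+1-p))⁻¹ * hss
      rw [hE2]
      exact (hinv s hs).symm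
    -- integrability of |u'| at infinity
    have hgint : ∀ r : ℝ, 0 < r → IntegrableOn (fun s : ℝ => |deriv u s|) (Set.Ioi r) := by
      intro r hr
      have hmeas : AEStronglyMeasurable (fun s : ℝ => |deriv u s|)
          (volume.restrict (Set.Ioi r)) :=
        ((hvcont.mono (Set.Ioi_subset_Ioi hr.le)).abs).aestronglyMeasurable measurableSet_Ioi
      have hbound_int : IntegrableOn (fun s : ℝ =>
          ((((N:ℝ)*(p-1) - ((N:ℝ)-1)*q)/(q+1-p))⁻¹) ^ (-(1/(q+1-p))) * s ^ (-(1/(q+1-p))))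
          (Set.Ioi r) :=
        (integrableOn_Ioi_rpow_of_lt (by linarith : -(1/(q+1-p)) < -1) hr).const_mul _
      apply Integrable.mono' hbound_int hmeas
      filter_upwards [ae_restrict_mem measurableSet_Ioi] with s hs
      have hs0 : (0:ℝ) < s := lt_trans hr hs
      have hDs : 0 < (((N:ℝ)*(p-1) - ((N:ℝ)-1)*q)/(q+1-p))⁻¹ * s := mul_pos hDinv hs0
      have hle : (((N:ℝ)*(p-1) - ((N:ℝ)-1)*q)/(q+1-p))⁻¹ * s
          ≤ C * s ^ (((N:ℝ)-1)*(q+1-p)/(p-1))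
            + (((N:ℝ)*(p-1) - ((N:ℝ)-1)*q)/(q+1-p))⁻¹ * s :=
        le_add_of_nonneg_left (mul_pos hCpos (Real.rpow_pos_of_pos hs0 _)).le
      have hmono := Real.rpow_le_rpow_of_nonpos hDs hle
        (by rw [neg_nonpos]; positivity :  -(1/(q+1-p)) ≤ 0)
      rw [Real.norm_eq_abs, abs_abs, hinv s hs0]
      calc (C * s ^ (((N:ℝ)-1)*(q+1-p)/(p-1))
            + (((N:ℝ)*(p-1) - ((N:ℝ)-1)*q)/(q+1-p))⁻¹ * s) ^ (-(1/(q+1-p)))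
          ≤ ((((N:ℝ)*(p-1) - ((N:ℝ)-1)*q)/(q+1-p))⁻¹ * s) ^ (-(1/(q+1-p))) := hmono
        _ = ((((N:ℝ)*(p-1) - ((N:ℝ)-1)*q)/(q+1-p))⁻¹) ^ (-(1/(q+1-p))) * s ^ (-(1/(q+1-p))) :=
            Real.mul_rpow hDinv.le hs0.le
    -- fundamental theorem of calculus
    have hFTC : ∀ r : ℝ, 0 < r → ∀ R : ℝ, r ≤ R
        → u R - u r = -(∫ s in r..R, |deriv u s|) := by
      intro r hr R hrR
      have hsub : Set.uIcc r R ⊆ Set.Ioi (0:ℝ) := by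
        rw [Set.uIcc_of_le hrR]
        exact fun x hx => lt_of_lt_of_le hr hx.1
      have hD : ∀ x ∈ Set.uIcc r R, HasDerivAt u (deriv u x) x := fun x hx => hud x (hsub hx)
      have hInt : IntervalIntegrable (deriv u) volume r R :=
        (hvcont.mono hsub).intervalIntegrable
      have h := intervalIntegral.integral_eq_sub_of_hasDerivAt hD hInt
      have h2 : (∫ s in r..R, |deriv u s|) = -(∫ s in r..R, deriv u s) := by
        rw [← intervalIntegral.integral_neg]
        exact intervalIntegral.integral_congr
          (fun x hx => abs_of_neg (hvneg x (hsub hx)))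
      rw [h2, h]
      ring
    -- limit at infinity
    have hlim : ∀ r : ℝ, 0 < r
        → Tendsto u atTop (𝓝 (u r - ∫ s in Set.Ioi r, |deriv u s|)) := by
      intro r hr
      have h1 := MeasureTheory.intervalIntegral_tendsto_integral_Ioi r (hgint r hr)
        (tendsto_id (α := ℝ))
      have h2 : Tendsto (fun R : ℝ => u r - ∫ s in r..R, |deriv u s|) atTop
          (𝓝 (u r - ∫ s in Set.Ioi r, |deriv u s|)) := tendsto_const_nhds.sub h1
      apply Filter.Tendsto.congr' ?_ h2
      filter_upwards [eventually_ge_atTop r] with R hR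
      have h3 := hFTC r hr R hR
      linarith
    -- conclude
    have hM0 : 0 ≤ u 1 - ∫ s in Set.Ioi (1:ℝ), |deriv u s| :=
      ge_of_tendsto (hlim 1 one_pos)
        (by filter_upwards [eventually_gt_atTop (0:ℝ)] with t ht; exact hpos t ht)
    refine ⟨u 1 - ∫ s in Set.Ioi (1:ℝ), |deriv u s|, hM0, ?_⟩
    intro r hr
    have huniq := tendsto_nhds_unique (hlim r hr) (hlim 1 one_pos)
    have hIcongr : (∫ s in Set.Ioi r,
        s ^ ((1 - (N : ℝ)) / (p - 1)) *
          ((((N : ℝ) * (p - 1) - ((N : ℝ) - 1) * q) / (q + 1 - p))⁻¹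
              * s ^ ((q + 1 - p) * (((N : ℝ) * (p - 1) - ((N : ℝ) - 1) * q) / (q + 1 - p)) / (p - 1))
            + k ^ (p - 1 - q)) ^ (-(1 / (q + 1 - p))))
        = ∫ s in Set.Ioi r, |deriv u s| :=
      setIntegral_congr_fun measurableSet_Ioi
        (fun s hs => hg s (lt_trans hr hs))
    rw [hIcongr]
    linarith [huniq]
end
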